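/- arXiv:1911.12744 — 8 statements merged into one kernel-verified Lean document; each statement's English description precedes it below -/
import Mathlib

section
/- Let m, p ≥ 1 and k > 1 be integers and let A = (A_1,…,A_m) be an m-tuple of n×n complex Hermitian matrices. If n ≥ (m+1)((m+1)(k-1) + k(p-1)), then Λ_{(k:p)}(A) is non-empty; that is, there exist p×p real diagonal matrices D_1,…,D_m and an n×(kp) complex matrix V with V*V = I_{kp} such that V*A_jV = D_j ⊗ I_k for all j = 1,…,m. -/
/-!
Choose unit vectors one at a time in the orthogonal complement of everything used so far, taking
each new `e` to be an eigenvector of the compression of `A_1` to that complement: then `A_1 e`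
lies in the old subspace plus `ℂ e`, so adding `e, A_2 e, …, A_m e` costs only `m` dimensions.
This yields `(k-1)(m+1) + 1` orthonormal vectors `e_i` with `⟪e_i, A_j e_l⟫ = 0` for `i ≠ l`.
By Tverberg's theorem the points `x_i = (⟪e_i, A_j e_i⟫)_j ∈ ℝ^m` split into `k` classes whose
convex hulls share a point `c = ∑_{i ∈ class t} w_i x_i`; the vectors
`u_t = ∑_{i ∈ class t} √(w_i) e_i` are then orthonormal with `⟪u_s, A_j u_t⟫ = δ_{st} c_j`,
one block of `D_j ⊗ I_k`. Repeating this `p` times, each time orthogonally to the previous blocks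
and their images under the `A_j`, fits into the `n` dimensions assumed. Tverberg's theorem itself
follows from Bárány's colourful Carathéodory theorem by Sarkaria's tensor lifting.
-/

open Matrix Kronecker
open Set Finset Module
open scoped InnerProductSpace RealInnerProductSpace

section Convex

theorem mem_convexHull_range_iff_exists_stdSimplex {R V ι : Type*} [Field R] [LinearOrder R]
    [IsStrictOrderedRing R] [AddCommGroup V] [Module R V] [Fintype ι] {y : ι → V} {x : V} :
    x ∈ convexHull R (range y) ↔ ∃ w ∈ stdSimplex R ι, ∑ i, w i • y i = x := by
  classical
  refine ⟨fun hx => ?_, fun ⟨w, hw, hwx⟩ => mem_convexHull_of_exists_fintype w y hw.1 hw.2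
    (fun i => mem_range_self i) hwx⟩
  have hconv : Convex R ((Fintype.linearCombination R y) '' stdSimplex R ι) :=
    (convex_stdSimplex R ι).linear_image _
  have hy : range y ⊆ (Fintype.linearCombination R y) '' stdSimplex R ι := by
    rintro _ ⟨i, rfl⟩
    exact ⟨Pi.single i 1, single_mem_stdSimplex R i, by simp [Fintype.linearCombination_apply]⟩
  obtain ⟨w, hw, rfl⟩ := convexHull_min hy hconv hx
  exact ⟨w, hw, by simp [Fintype.linearCombination_apply]⟩

variable {F : Type*} [NormedAddCommGroup F] [InnerProductSpace ℝ F]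

theorem norm_sq_le_inner_of_isMinOn {K : Set F} (hK : Convex ℝ K) {z x : F} (hz : z ∈ K)
    (hmin : IsMinOn (‖·‖) K z) (hx : x ∈ K) : ‖z‖ ^ 2 ≤ ⟪z, x⟫ := by
  have hmin' : IsMinOn (fun y => ‖y‖ ^ 2) K z := fun y hy => by
    simpa using pow_le_pow_left₀ (norm_nonneg z) (hmin hy) 2
  have := hmin'.localize.hasFDerivWithinAt_nonneg
    (hasStrictFDerivAt_norm_sq z).hasFDerivAt.hasFDerivWithinAt
    (sub_mem_posTangentConeAt_of_segment_subset (hK.segment_subset hz hx))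
  simp [inner_sub_right] at this
  linarith

theorem AffineIndependent.card_le_finrank_of_inner_eq [FiniteDimensional ℝ F] {ι : Type*}
    [Fintype ι] {p : ι → F} (hp : AffineIndependent ℝ p) {z : F} (hz : z ≠ 0) {c : ℝ}
    (hpc : ∀ i, ⟪z, p i⟫ = c) : Fintype.card ι ≤ finrank ℝ F := by
  have hspan : vectorSpan ℝ (range p) ≤ (ℝ ∙ z)ᗮ := by
    rw [vectorSpan_def, Submodule.span_le]
    rintro _ ⟨_, ⟨i, rfl⟩, _, ⟨l, rfl⟩, rfl⟩
    simp [Submodule.mem_orthogonal_singleton_iff_inner_right, inner_sub_right, hpc]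
  have hrank := (ℝ ∙ z).finrank_add_finrank_orthogonal
  rw [finrank_span_singleton hz] at hrank
  have := Submodule.finrank_mono hspan
  have := hp.card_le_finrank_succ
  omega

theorem exists_finset_card_le_finrank_of_isMinOn [FiniteDimensional ℝ F] {s : Set F} {z : F}
    (hz : z ∈ convexHull ℝ s) (hmin : IsMinOn (‖·‖) (convexHull ℝ s) z) (hz0 : z ≠ 0) :
    ∃ t : Finset F, ↑t ⊆ s ∧ #t ≤ finrank ℝ F ∧ z ∈ convexHull ℝ ↑t := by
  classical
  obtain ⟨ι, _, q, w, hqs, hq, hw0, hw1, hwz⟩ := eq_pos_convex_span_of_mem_convexHull hz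
  have hle : ∀ i, ‖z‖ ^ 2 ≤ ⟪z, q i⟫ := fun i =>
    norm_sq_le_inner_of_isMinOn (convex_convexHull ℝ s) hz hmin
      (subset_convexHull ℝ s (hqs (mem_range_self i)))
  -- `z` is a positive combination of the `q i`, all in the half-space `‖z‖ ^ 2 ≤ ⟪z, ·⟫`,
  -- so they all lie on its boundary hyperplane.
  have hsum : ∑ i, w i * ‖z‖ ^ 2 = ∑ i, w i * ⟪z, q i⟫ := by
    rw [← Finset.sum_mul, hw1, one_mul, ← real_inner_self_eq_norm_sq]
    nth_rewrite 2 [← hwz]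
    simp [inner_sum, real_inner_smul_right]
  have hon : ∀ i, ⟪z, q i⟫ = ‖z‖ ^ 2 := fun i =>
    (mul_left_cancel₀ (hw0 i).ne' (((Finset.sum_eq_sum_iff_of_le fun i _ =>
      mul_le_mul_of_nonneg_left (hle i) (hw0 i).le).1 hsum) i (mem_univ i))).symm
  refine ⟨univ.image q, by simpa [Set.range_subset_iff] using fun i => hqs (mem_range_self i),
    card_image_le.trans (hq.card_le_finrank_of_inner_eq hz0 hon),
    mem_convexHull_of_exists_fintype w q (fun i => (hw0 i).le) hw1
      (fun i => by simp) hwz⟩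

theorem exists_inner_nonpos_of_zero_mem_convexHull {s : Set F} (hs : (0 : F) ∈ convexHull ℝ s)
    (z : F) : ∃ x ∈ s, ⟪z, x⟫ ≤ 0 := by
  by_contra! h
  have hconv : Convex ℝ {x : F | 0 < ⟪z, x⟫} :=
    convex_halfSpace_gt (innerₛₗ ℝ z).isLinear 0
  have h0 : 0 < ⟪z, (0 : F)⟫ := convexHull_min h hconv hs
  simp at h0

theorem exists_zero_mem_convexHull_colorful [FiniteDimensional ℝ F] {ι κ : Type*} [Fintype ι]
    [Finite κ] (hι : finrank ℝ F < Fintype.card ι) (g : ι → κ → F)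
    (hg : ∀ i, (0 : F) ∈ convexHull ℝ (range (g i))) :
    ∃ τ : ι → κ, (0 : F) ∈ convexHull ℝ (range fun i => g i (τ i)) := by
  classical
  set K : (ι → κ) → Set F := fun τ => convexHull ℝ (range fun i => g i (τ i))
  have : Nonempty ι := Fintype.card_pos_iff.mp (by omega)
  have : Nonempty κ := range_nonempty_iff_nonempty.mp
    (convexHull_nonempty_iff.mp ⟨0, hg (Classical.arbitrary ι)⟩)
  obtain ⟨z, hzS, hmin⟩ := (isCompact_iUnion fun τ => (finite_range _).isCompact_convexHull ℝ :
      IsCompact (⋃ τ, K τ)).exists_isMinOn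
    (nonempty_iUnion.mpr ⟨Classical.arbitrary _, (range_nonempty _).convexHull⟩)
    continuous_norm.continuousOn
  obtain ⟨τ, hzτ⟩ := mem_iUnion.mp hzS
  by_contra! hK0
  have hz0 : z ≠ 0 := by rintro rfl; exact hK0 τ hzτ
  obtain ⟨t, hts, htcard, hzt⟩ := exists_finset_card_le_finrank_of_isMinOn hzτ
    (hmin.on_subset (subset_iUnion K τ)) hz0
  -- Some colour `i₀` is not needed to express the points of `t`; swap it for a point of colour
  -- `i₀` on the near side of `z`, which brings the convex hull closer to the origin.
  choose σ hσ using fun x : t => hts x.2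
  obtain ⟨i₀, hi₀⟩ : ∃ i₀, ∀ x, σ x ≠ i₀ := by
    by_contra! h
    have := Fintype.card_le_of_surjective σ h
    simp only [Fintype.card_coe] at this
    omega
  obtain ⟨_, ⟨t₀, rfl⟩, ht₀⟩ := exists_inner_nonpos_of_zero_mem_convexHull (hg i₀) z
  set τ' := Function.update τ i₀ t₀
  have hzτ' : z ∈ K τ' := by
    refine convexHull_mono (fun x hx => ?_) hzt
    exact ⟨σ ⟨x, hx⟩, by simp [τ', Function.update_of_ne (hi₀ _), hσ]⟩
  have hgτ' : g i₀ t₀ ∈ K τ' := subset_convexHull ℝ _ ⟨i₀, by simp [τ']⟩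
  have := norm_sq_le_inner_of_isMinOn (convex_convexHull ℝ _) hzτ'
    (hmin.on_subset (subset_iUnion K τ')) hgτ'
  exact hz0 (norm_eq_zero.mp (by nlinarith [norm_nonneg z]))

theorem exists_weighted_tverberg_partition {α ι : Type*} [Fintype α] [Fintype ι] {r : ℕ}
    (hα : r * (Fintype.card ι + 1) < Fintype.card α) (x : α → ι → ℝ) :
    ∃ (τ : α → Fin (r + 1)) (w : α → ℝ) (c : ι → ℝ), (∀ i, 0 ≤ w i) ∧
      ∀ t, ∑ i with τ i = t, w i = 1 ∧ ∑ i with τ i = t, w i • x i = c := by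
  -- Sarkaria's lifting: colour `i` consists of the tensors `e t ⊗ (x i, 1)`, where
  -- `e 0, …, e r` are the vertices of a simplex in `ℝ ^ r` centred at the origin.
  set xbar : α → Option ι → ℝ := fun i a => a.elim 1 (x i)
  set e : Fin (r + 1) → Fin r → ℝ := fun t q =>
    (if t = q.castSucc then 1 else 0) - if t = Fin.last r then 1 else 0
  set g : α → Fin (r + 1) → EuclideanSpace ℝ (Fin r × Option ι) := fun i t =>
    WithLp.toLp 2 fun q => e t q.1 * xbar i q.2
  have hg : ∀ i, (0 : EuclideanSpace ℝ (Fin r × Option ι)) ∈ convexHull ℝ (range (g i)) := by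
    intro i
    refine mem_convexHull_range_iff_exists_stdSimplex.mpr
      ⟨fun _ => ((r : ℝ) + 1)⁻¹, ⟨fun _ => by positivity, by simp; field_simp⟩, ?_⟩
    ext q
    simp [g, e, ← Finset.mul_sum, sub_mul, Finset.sum_sub_distrib]
  obtain ⟨τ, hτ⟩ := exists_zero_mem_convexHull_colorful (by simpa using hα) g hg
  obtain ⟨w, ⟨hw0, hw1⟩, hw⟩ := mem_convexHull_range_iff_exists_stdSimplex.mp hτ
  set z : Fin (r + 1) → Option ι → ℝ := fun t a => ∑ i with τ i = t, w i * xbar i a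
  have hz : ∀ t, z t = z (Fin.last r) := by
    have hcoord : ∀ (q : Fin r) a, z q.castSucc a - z (Fin.last r) a = 0 := by
      intro q a
      have := congrArg (fun v => v (q, a)) hw
      simpa [g, e, z, Finset.sum_filter, sub_mul, mul_sub, Finset.sum_sub_distrib, ite_mul,
        mul_ite, mul_comm, mul_left_comm] using this
    intro t
    induction t using Fin.lastCases with
    | last => rfl
    | cast q => funext a; linarith [hcoord q a]
  have hmass : ((r : ℝ) + 1) * z (Fin.last r) none = 1 := by
    calc ((r : ℝ) + 1) * z (Fin.last r) none = ∑ t, z t none := by simp [hz]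
      _ = 1 := by simp [z, xbar, Finset.sum_fiberwise, hw1]
  refine ⟨τ, fun i => (r + 1) * w i, fun j => (r + 1) * z (Fin.last r) (some j),
    fun i => mul_nonneg (by positivity) (hw0 i), fun t => ⟨?_, ?_⟩⟩
  · calc ∑ i with τ i = t, ((r : ℝ) + 1) * w i = (r + 1) * z t none := by
          simp [z, xbar, Finset.mul_sum]
      _ = 1 := by rw [hz t, hmass]
  · ext j
    calc (∑ i with τ i = t, (((r : ℝ) + 1) * w i) • x i) j = (r + 1) * z t (some j) := by
          simp [z, xbar, Finset.mul_sum, Finset.sum_apply, mul_assoc]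
      _ = (r + 1) * z (Fin.last r) (some j) := by rw [hz t]

end Convex

section Complex

variable {E : Type*} [NormedAddCommGroup E] [InnerProductSpace ℂ E]

theorem exists_norm_eq_one_mem_orthogonal_sub_smul_mem [FiniteDimensional ℂ E]
    (S : E →ₗ[ℂ] E) {W : Submodule ℂ E} (hW : finrank ℂ W < finrank ℂ E) :
    ∃ w ∈ Wᗮ, ‖w‖ = 1 ∧ ∃ μ : ℂ, S w - μ • w ∈ W := by
  have : Nontrivial Wᗮ := Submodule.nontrivial_iff_ne_bot.mpr fun h => by
    have := W.finrank_add_finrank_orthogonal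
    rw [h, finrank_bot] at this
    omega
  obtain ⟨μ, hμ⟩ := Module.End.exists_eigenvalue
    (Wᗮ.orthogonalProjectionOnto.toLinearMap ∘ₗ S ∘ₗ Wᗮ.subtype)
  obtain ⟨v, hv⟩ := hμ.exists_hasEigenvector
  have hv0 : (v : E) ≠ 0 := by simpa using hv.2
  have hSv : S v - μ • (v : E) ∈ W := by
    have := Wᗮ.sub_starProjection_mem_orthogonal (S v)
    rw [Submodule.orthogonal_orthogonal] at this
    convert this using 2
    exact (congrArg Subtype.val hv.apply_eq_smul).symm
  refine ⟨(‖(v : E)‖⁻¹ : ℂ) • (v : E), Wᗮ.smul_mem _ v.2, norm_smul_inv_norm hv0, μ, ?_⟩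
  rw [map_smul, smul_comm, ← smul_sub]
  exact W.smul_mem _ hSv

theorem inner_cons_map_cons_eq_zero {S : E →ₗ[ℂ] E} (hS : S.IsSymmetric) {W : Submodule ℂ E}
    {v : E} (hSv : S v ∈ W) {M : ℕ} {w : Fin M → E} (hw : ∀ s, w s ∈ Wᗮ)
    (h : ∀ s t, s ≠ t → ⟪w s, S (w t)⟫_ℂ = 0) (s t : Fin (M + 1)) (hst : s ≠ t) :
    ⟪(Fin.cons v w : Fin (M + 1) → E) s, S ((Fin.cons v w : Fin (M + 1) → E) t)⟫_ℂ = 0 := by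
  cases s using Fin.cases <;> cases t using Fin.cases
  · exact absurd rfl hst
  · rw [Fin.cons_zero, Fin.cons_succ, ← hS]
    exact Submodule.inner_right_of_mem_orthogonal hSv (hw _)
  · rw [Fin.cons_zero, Fin.cons_succ]
    exact Submodule.inner_left_of_mem_orthogonal hSv (hw _)
  · rw [Fin.cons_succ, Fin.cons_succ]
    exact h _ _ fun h' => hst (congrArg Fin.succ h')

theorem exists_orthonormal_mem_orthogonal_inner_map_eq_zero [FiniteDimensional ℂ E] {ι : Type*}
    [Fintype ι] [Nonempty ι] {T : ι → E →ₗ[ℂ] E} (hT : ∀ j, (T j).IsSymmetric) (M : ℕ)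
    {W : Submodule ℂ E} (hW : finrank ℂ W + M * Fintype.card ι < finrank ℂ E) :
    ∃ w : Fin (M + 1) → E, Orthonormal ℂ w ∧ (∀ s, w s ∈ Wᗮ) ∧
      ∀ j s t, s ≠ t → ⟪w s, T j (w t)⟫_ℂ = 0 := by
  classical
  obtain ⟨j₀⟩ := ‹Nonempty ι›
  induction M generalizing W with
  | zero =>
    obtain ⟨w₀, hw₀W, hw₀, -⟩ :=
      exists_norm_eq_one_mem_orthogonal_sub_smul_mem (T j₀) (W := W) (by simpa using hW)
    exact ⟨fun _ => w₀, ⟨fun _ => hw₀, fun s t hst => absurd (Fin.ext (by omega)) hst⟩,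
      fun _ => hw₀W, fun j s t hst => absurd (Fin.ext (by omega)) hst⟩
  | succ M ih =>
    obtain ⟨w₀, hw₀W, hw₀, μ, hμ⟩ :=
      exists_norm_eq_one_mem_orthogonal_sub_smul_mem (T j₀) (W := W) (by omega)
    -- Since `T j₀ w₀ ∈ W ⊔ ℂ w₀`, adding `w₀` and all `T j w₀` costs only `card ι` dimensions.
    set W' := W ⊔ Submodule.span ℂ (range (Function.update (fun j => T j w₀) j₀ w₀))
    have hW' : finrank ℂ W' ≤ finrank ℂ W + Fintype.card ι :=
      (Submodule.finrank_add_le_finrank_add_finrank _ _).trans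
        (Nat.add_le_add_left (finrank_range_le_card _) _)
    obtain ⟨w, hw, hwW', hwT⟩ := ih (W := W') (by rw [add_mul] at hW; omega)
    have hw₀W' : w₀ ∈ W' := Submodule.mem_sup_right (Submodule.subset_span ⟨j₀, by simp⟩)
    have hTw₀ : ∀ j, T j w₀ ∈ W' := by
      intro j
      by_cases hj : j = j₀
      · simpa [hj] using W'.add_mem (Submodule.mem_sup_left hμ) (W'.smul_mem μ hw₀W')
      · exact Submodule.mem_sup_right (Submodule.subset_span ⟨j, by simp [hj]⟩)
    refine ⟨Fin.cons w₀ w, ⟨fun s => ?_, inner_cons_map_cons_eq_zero LinearMap.IsSymmetric.id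
      hw₀W' hwW' fun s t hst => hw.2 hst⟩, fun s => ?_,
      fun j => inner_cons_map_cons_eq_zero (hT j) (hTw₀ j) hwW' (hwT j)⟩
    · cases s using Fin.cases
      · simpa using hw₀
      · simpa using hw.1 _
    · cases s using Fin.cases
      · simpa using hw₀W
      · simpa using Submodule.orthogonal_le le_sup_left (hwW' _)

theorem inner_sum_smul_map_sum_smul {κ : Type*} [Fintype κ] {S : E →ₗ[ℂ] E} {e : κ → E}
    (he : ∀ i l, i ≠ l → ⟪e i, S (e l)⟫_ℂ = 0) (a b : κ → ℝ) :
    ⟪∑ i, (a i : ℂ) • e i, S (∑ i, (b i : ℂ) • e i)⟫_ℂ =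
      ∑ i, ((a i * b i : ℝ) : ℂ) * ⟪e i, S (e i)⟫_ℂ := by
  simp only [map_sum, map_smul, sum_inner, inner_sum, inner_smul_left, inner_smul_right,
    Complex.conj_ofReal]
  refine Finset.sum_congr rfl fun i _ => ?_
  rw [Finset.sum_eq_single i (fun l _ hl => by rw [he l i hl, mul_zero]) (by simp)]
  push_cast
  ring

theorem exists_block [FiniteDimensional ℂ E] {ι : Type*} [Fintype ι] [Nonempty ι]
    {T : ι → E →ₗ[ℂ] E} (hT : ∀ j, (T j).IsSymmetric) (r : ℕ) {W : Submodule ℂ E}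
    (hW : finrank ℂ W + r * (Fintype.card ι + 1) * Fintype.card ι < finrank ℂ E) :
    ∃ (u : Fin (r + 1) → E) (c : ι → ℝ), (∀ t, u t ∈ Wᗮ) ∧
      (∀ s t, ⟪u s, u t⟫_ℂ = if s = t then 1 else 0) ∧
      ∀ j s t, ⟪u s, T j (u t)⟫_ℂ = if s = t then (c j : ℂ) else 0 := by
  obtain ⟨e, he, heW, heT⟩ := exists_orthonormal_mem_orthogonal_inner_map_eq_zero hT _ hW
  obtain ⟨τ, w, c, hw0, hτ⟩ := exists_weighted_tverberg_partition (r := r) (by simp)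
    fun i j => (⟪e i, T j (e i)⟫_ℂ).re
  set a : Fin (r + 1) → Fin (r * (Fintype.card ι + 1) + 1) → ℝ :=
    fun t i => if τ i = t then √(w i) else 0
  set u : Fin (r + 1) → E := fun t => ∑ i, (a t i : ℂ) • e i
  have hu : ∀ S : E →ₗ[ℂ] E, (∀ i l, i ≠ l → ⟪e i, S (e l)⟫_ℂ = 0) → ∀ s t,
      ⟪u s, S (u t)⟫_ℂ = if s = t then ∑ i with τ i = s, (w i : ℂ) * ⟪e i, S (e i)⟫_ℂ else 0 := by
    intro S hS s t
    rw [inner_sum_smul_map_sum_smul hS, Finset.sum_filter]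
    split_ifs with hst
    · subst hst
      refine Finset.sum_congr rfl fun i _ => ?_
      by_cases hs : τ i = s <;> simp [a, hs, Real.mul_self_sqrt (hw0 i)]
    · refine Finset.sum_eq_zero fun i _ => ?_
      by_cases hs : τ i = s <;> simp [a, hs, hst]
  refine ⟨u, c, fun t => Submodule.sum_mem _ fun i _ => Submodule.smul_mem _ _ (heW i),
    fun s t => ?_, fun j s t => ?_⟩
  · rw [show ⟪u s, u t⟫_ℂ = ⟪u s, (LinearMap.id : E →ₗ[ℂ] E) (u t)⟫_ℂ from rfl,
      hu _ fun i l h => he.2 h]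
    simp [inner_self_eq_norm_sq_to_K, he.1, ← Complex.ofReal_sum, (hτ s).1]
  · have hreal : ∀ i, ((⟪e i, T j (e i)⟫_ℂ).re : ℂ) = ⟪e i, T j (e i)⟫_ℂ := fun i =>
      (hT j).coe_re_inner_self_apply (e i)
    rw [hu (T j) (heT j), ← (hτ s).2]
    simp [Finset.sum_apply, hreal]

/-- In the family `u`, the matrix `(⟪u a s, S (u a' t)⟫)` of `S` is `diagonal d ⊗ₖ 1`. -/
def HasBlockScalarMatrix {α β : Type*} [DecidableEq α] [DecidableEq β] (S : E →ₗ[ℂ] E)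
    (u : α → β → E) (d : α → ℝ) : Prop :=
  ∀ a s a' t, ⟪u a s, S (u a' t)⟫_ℂ = if a = a' ∧ s = t then (d a : ℂ) else 0

theorem HasBlockScalarMatrix.snoc {b k : ℕ} {S : E →ₗ[ℂ] E} (hS : S.IsSymmetric)
    {u : Fin b → Fin k → E} {d : Fin b → ℝ} (h : HasBlockScalarMatrix S u d)
    {W : Submodule ℂ E} (hSu : ∀ a s, S (u a s) ∈ W) {v : Fin k → E} (hv : ∀ t, v t ∈ Wᗮ)
    {c : ℝ} (hvS : ∀ s t, ⟪v s, S (v t)⟫_ℂ = if s = t then (c : ℂ) else 0) :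
    HasBlockScalarMatrix S (Fin.snoc u v : Fin (b + 1) → Fin k → E) (Fin.snoc d c) := by
  intro a s a' t
  cases a using Fin.lastCases <;> cases a' using Fin.lastCases
  · simpa using hvS s t
  · simpa [(Fin.castSucc_lt_last _).ne'] using
      Submodule.inner_left_of_mem_orthogonal (hSu _ _) (hv s)
  · simpa [(Fin.castSucc_lt_last _).ne] using
      (hS _ (v t)).symm.trans (Submodule.inner_right_of_mem_orthogonal (hSu _ s) (hv t))
  · simpa using h _ s _ t

theorem exists_blocks [FiniteDimensional ℂ E] {ι : Type*} [Fintype ι] [Nonempty ι]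
    {T : ι → E →ₗ[ℂ] E} (hT : ∀ j, (T j).IsSymmetric) (r b : ℕ)
    (hb : (b - 1) * ((r + 1) * (Fintype.card ι + 1)) + r * (Fintype.card ι + 1) * Fintype.card ι <
      finrank ℂ E) :
    ∃ (u : Fin b → Fin (r + 1) → E) (d : ι → Fin b → ℝ),
      HasBlockScalarMatrix LinearMap.id u 1 ∧ ∀ j, HasBlockScalarMatrix (T j) u (d j) := by
  induction b with
  | zero => exact ⟨Fin.elim0, fun _ => Fin.elim0, fun a => a.elim0, fun _ a => a.elim0⟩
  | succ b ih =>
    obtain ⟨u, d, hu, hd⟩ := ih (lt_of_le_of_lt (by gcongr; omega) hb)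
    set G : Option ι × Fin b × Fin (r + 1) → E := fun q =>
      q.1.elim LinearMap.id T (u q.2.1 q.2.2)
    have hW : finrank ℂ (Submodule.span ℂ (range G)) ≤ (Fintype.card ι + 1) * (b * (r + 1)) := by
      simpa [Set.finrank] using finrank_range_le_card (R := ℂ) G
    obtain ⟨v, c, hvW, hv, hvT⟩ :=
      exists_block hT r (W := Submodule.span ℂ (range G)) (by simp at hb; nlinarith)
    refine ⟨Fin.snoc u v, fun j => Fin.snoc (d j) (c j), ?_, fun j => (hd j).snoc (hT j)
      (fun a s => Submodule.subset_span (mem_range_self (f := G) (some j, a, s))) hvW (hvT j)⟩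
    convert hu.snoc LinearMap.IsSymmetric.id
      (fun a s => Submodule.subset_span (mem_range_self (f := G) (none, a, s))) hvW (c := 1)
      (by simpa using hv)
    ext a
    cases a using Fin.lastCases <;> simp

end Complex

theorem HasBlockScalarMatrix.conjTranspose_mul_mul {n α β : Type*} [Fintype n] [DecidableEq n]
    [DecidableEq α] [DecidableEq β] {B : Matrix n n ℂ} {u : α → β → EuclideanSpace ℂ n}
    {d : α → ℝ} (h : HasBlockScalarMatrix B.toEuclideanLin u d) :
    (of fun x (c : α × β) => u c.1 c.2 x)ᴴ * B * of (fun x (c : α × β) => u c.1 c.2 x) =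
      (diagonal d).map (Complex.ofReal ·) ⊗ₖ (1 : Matrix β β ℂ) := by
  ext ⟨a, s⟩ ⟨a', t⟩
  have := h a s a' t
  simp only [EuclideanSpace.inner_eq_star_dotProduct, toEuclideanLin, toLpLin_apply] at this
  calc _ = B *ᵥ (u a' t).ofLp ⬝ᵥ star (u a s).ofLp := by
        simp only [mul_apply, conjTranspose_apply, of_apply, dotProduct, mulVec, Pi.star_apply,
          Finset.sum_mul]
        rw [Finset.sum_comm]
        exact Finset.sum_congr rfl fun _ _ => Finset.sum_congr rfl fun _ _ => by ring
    _ = _ := by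
        rw [this, kroneckerMap_apply, map_apply, diagonal_apply, one_apply]
        by_cases ha : a = a' <;> by_cases hs : s = t <;> simp [ha, hs]

theorem stmt1_general (n m k p : ℕ) (hm : 1 ≤ m) (hk : 1 < k)
    (A : Fin m → Matrix (Fin n) (Fin n) ℂ) (hA : ∀ j, (A j).IsHermitian)
    (hn : (m + 1) * ((m + 1) * (k - 1) + k * (p - 1)) ≤ n) :
    ∃ (D : Fin m → Matrix (Fin p) (Fin p) ℝ) (V : Matrix (Fin n) (Fin p × Fin k) ℂ),
      (∀ j, (D j).IsDiag) ∧ Vᴴ * V = 1 ∧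
      ∀ j, Vᴴ * A j * V =
        ((D j).map (Complex.ofReal ·)) ⊗ₖ (1 : Matrix (Fin k) (Fin k) ℂ) := by
  obtain ⟨r, rfl⟩ : ∃ r, k = r + 1 := ⟨k - 1, by omega⟩
  have : Nonempty (Fin m) := ⟨⟨0, hm⟩⟩
  have hdim : (p - 1) * ((r + 1) * (m + 1)) + r * (m + 1) * m < n := by
    rw [add_tsub_cancel_right] at hn
    nlinarith
  obtain ⟨u, d, hu, hd⟩ := exists_blocks (fun j => isSymmetric_toEuclideanLin_iff.mpr (hA j)) r p
    (by simpa using hdim)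
  refine ⟨fun j => diagonal (d j), of fun x c => u c.1 c.2 x, fun j => isDiag_diagonal _, ?_,
    fun j => (hd j).conjTranspose_mul_mul⟩
  have h1 : HasBlockScalarMatrix (toEuclideanLin (1 : Matrix (Fin n) (Fin n) ℂ)) u 1 := by
    simpa using hu
  simpa using h1.conjTranspose_mul_mul

/-- Theorem 2.3: If `A = (A_1, …, A_m)` is an `m`-tuple of `n × n`
Hermitian matrices, `m, p ≥ 1`, `k > 1`, and `n ≥ (m+1)((m+1)(k-1) + k(p-1))`, then
`Λ_{(k:p)}(A)` is nonempty: there exist `p × p` real diagonal matrices `D_1, …, D_m`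
and an `n × (kp)` matrix `V` with `V* V = I_{kp}` and `V* A_j V = D_j ⊗ I_k` for all `j`. -/
theorem stmt1 (n m k p : ℕ) (hm : 1 ≤ m) (hp : 1 ≤ p) (hk : 1 < k)
    (A : Fin m → Matrix (Fin n) (Fin n) ℂ) (hA : ∀ j, (A j).IsHermitian)
    (hn : (m + 1) * ((m + 1) * (k - 1) + k * (p - 1)) ≤ n) :
    ∃ (D : Fin m → Matrix (Fin p) (Fin p) ℝ) (V : Matrix (Fin n) (Fin p × Fin k) ℂ),
      (∀ j, (D j).IsDiag) ∧ Vᴴ * V = 1 ∧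
      ∀ j, Vᴴ * A j * V =
        ((D j).map (Complex.ofReal ·)) ⊗ₖ (1 : Matrix (Fin k) (Fin k) ℂ) :=
  stmt1_general n m k p hm hk A hA hn
end

section
/- Let E_1,…,E_c be n×n complex matrices with Σ_i E_i*E_i = I_n (Kraus operators of a quantum channel Φ(ρ) = Σ_i E_i ρ E_i*), and let k, p ≥ 1. Then there exists a hybrid (k:p) quantum error correcting code for Φ — i.e., there exist mutually orthogonal rank-k orthogonal projections P_1,…,P_p on ℂ^n and complex scalars λ_{ij}^{(r)} such that P_r E_i*E_j P_s = δ_{rs} λ_{ij}^{(r)} P_r for all 1 ≤ i,j ≤ c and 1 ≤ r,s ≤ p — if and only if the joint rank (k:p)-matricial range Λ_{(k:p)}(E_1*E_1, E_1*E_2, …, E_c*E_c) of the c²-tuple of all products (E_i*E_j)_{1≤i,j≤c} is non-empty. -/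
/-!
A rank-`k` orthogonal projection `P` factors as `W Wᴴ` with `Wᴴ W = I_k` (take for the columns
of `W` eigenvectors of `P` for the eigenvalue `1`), and then the code condition
`P_r E_i* E_j P_s = δ_rs λ P_r` is equivalent to `W_rᴴ E_i* E_j W_s = δ_rs λ I_k`. Placing the
isometries `W_1, …, W_p` side by side gives an isometry `V` whose compressions `V* E_i* E_j V`
have exactly these `k × k` blocks, i.e. equal `D ⊗ I_k` with `D` diagonal.
-/

open Matrix Kronecker

/-- The joint rank `(k:p)`-matricial range of a tuple `A` of square complex matrices
(rows/columns indexed by a finite type `I` of cardinality `n`, tuple indexed by `J`):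
tuples `(D_j)` of `p × p` complex diagonal matrices such that there is an `n × (kp)`
matrix `V` with `V* V = I_{kp}` and `V* A_j V = D_j ⊗ I_k` for all `j`. -/
def matricialRange {I J : Type*} [Fintype I] (k p : ℕ)
    (A : J → Matrix I I ℂ) : Set (J → Matrix (Fin p) (Fin p) ℂ) :=
  {D | (∀ j, (D j).IsDiag) ∧
    ∃ V : Matrix I (Fin p × Fin k) ℂ, Vᴴ * V = 1 ∧
      ∀ j, Vᴴ * A j * V = (D j) ⊗ₖ (1 : Matrix (Fin k) (Fin k) ℂ)}

/-- The joint rank-`k` numerical range `Λ_k(A) = Λ_{(k:1)}(A)`, with elements identified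
with scalar tuples: `x ∈ Λ_k(A)` iff there is `V` with `V* V = I_k` and `V* A_j V = x_j I_k`. -/
def jointRankRange {I J : Type*} [Fintype I] (k : ℕ)
    (A : J → Matrix I I ℂ) : Set (J → ℂ) :=
  {x | ∃ V : Matrix I (Fin k) ℂ, Vᴴ * V = 1 ∧ ∀ j, Vᴴ * A j * V = x j • 1}

/-- The joint rank-`k` numerical range, projection form: `x ∈ Λ_k(A)` iff there is a
rank-`k` orthogonal projection `P` with `P A_j P = x_j P` for all `j`. -/
def jointRankRangeP {n : ℕ} {J : Type*} (k : ℕ)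
    (A : J → Matrix (Fin n) (Fin n) ℂ) : Set (J → ℂ) :=
  {x | ∃ P : Matrix (Fin n) (Fin n) ℂ, P.IsHermitian ∧ P * P = P ∧ P.rank = k ∧
    ∀ j, P * A j * P = x j • P}

namespace Matrix

section Blocks

variable {m ι κ α : Type*} [Fintype m] [Semiring α] [StarRing α]

lemma submatrix_prodMk_conjTranspose_mul_mul (V : Matrix m (ι × κ) α) (A : Matrix m m α)
    (r s : ι) :
    (Vᴴ * A * V).submatrix (Prod.mk r) (Prod.mk s) =
      (V.submatrix id (Prod.mk r))ᴴ * A * V.submatrix id (Prod.mk s) := by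
  rw [submatrix_mul _ _ _ id _ Function.bijective_id,
    submatrix_mul _ _ _ id _ Function.bijective_id, conjTranspose_submatrix]
  rfl

variable [DecidableEq ι] [DecidableEq κ]

lemma conjTranspose_mul_mul_eq_diagonal_kronecker_one_iff (V : Matrix m (ι × κ) α)
    (A : Matrix m m α) (d : ι → α) :
    Vᴴ * A * V = diagonal d ⊗ₖ (1 : Matrix κ κ α) ↔
      ∀ r s, (V.submatrix id (Prod.mk r))ᴴ * A * V.submatrix id (Prod.mk s) =
        if r = s then d r • 1 else 0 := by
  simp only [← submatrix_prodMk_conjTranspose_mul_mul]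
  constructor
  · rintro h r s
    ext t u
    by_cases hrs : r = s <;> simp [h, hrs]
  · intro h
    ext ⟨r, t⟩ ⟨s, u⟩
    have := congrFun (congrFun (h r s) t) u
    by_cases hrs : r = s <;> simp_all

lemma conjTranspose_mul_self_eq_one_iff (V : Matrix m (ι × κ) α) :
    Vᴴ * V = 1 ↔
      ∀ r s, (V.submatrix id (Prod.mk r))ᴴ * V.submatrix id (Prod.mk s) =
        if r = s then 1 else 0 := by
  classical
  simpa [diagonal_one', one_kronecker_one] using
    conjTranspose_mul_mul_eq_diagonal_kronecker_one_iff V 1 1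

end Blocks

section Projections

variable {m κ 𝕜 : Type*} [RCLike 𝕜] [Fintype m] [DecidableEq m] [Fintype κ] [DecidableEq κ]

lemma IsHermitian.eigenvalues_eq_zero_or_one {P : Matrix m m 𝕜} (hP : P.IsHermitian)
    (hPP : P * P = P) (i : m) : hP.eigenvalues i = 0 ∨ hP.eigenvalues i = 1 := by
  set v := ⇑(hP.eigenvectorBasis i)
  have hv : v ≠ 0 := by simpa [v] using hP.eigenvectorBasis.orthonormal.ne_zero i
  have h : (hP.eigenvalues i * hP.eigenvalues i) • v = hP.eigenvalues i • v := by
    rw [← smul_smul, ← hP.mulVec_eigenvectorBasis, ← mulVec_smul,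
      ← hP.mulVec_eigenvectorBasis, mulVec_mulVec, hPP]
  exact IsIdempotentElem.iff_eq_zero_or_one.mp (smul_left_injective ℝ hv h)

lemma IsHermitian.mul_eigenvectorUnitary {P : Matrix m m 𝕜} (hP : P.IsHermitian) :
    P * (hP.eigenvectorUnitary : Matrix m m 𝕜) =
      (hP.eigenvectorUnitary : Matrix m m 𝕜) * diagonal (RCLike.ofReal ∘ hP.eigenvalues) := by
  have h := hP.conjStarAlgAut_star_eigenvectorUnitary
  rw [Unitary.conjStarAlgAut_star_apply] at h
  rw [← h, ← Matrix.mul_assoc, ← Matrix.mul_assoc,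
    Unitary.mul_star_self_of_mem hP.eigenvectorUnitary.2, Matrix.one_mul]

lemma IsHermitian.exists_isometry_mul_eq_self {P : Matrix m m 𝕜} (hP : P.IsHermitian)
    (hPP : P * P = P) (hrank : Fintype.card κ ≤ P.rank) :
    ∃ W : Matrix m κ 𝕜, Wᴴ * W = 1 ∧ P * W = W := by
  rw [hP.rank_eq_card_non_zero_eigs] at hrank
  obtain ⟨f⟩ := Function.Embedding.nonempty_of_card_le hrank
  set U : Matrix m m 𝕜 := (hP.eigenvectorUnitary : Matrix m m 𝕜)
  refine ⟨U.submatrix id (Subtype.val ∘ f), ?_, ?_⟩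
  · rw [conjTranspose_submatrix, ← submatrix_mul _ _ _ id _ Function.bijective_id,
      ← star_eq_conjTranspose, Unitary.coe_star_mul_self,
      submatrix_one _ (Subtype.val_injective.comp f.injective)]
  · have hPU : P * U.submatrix id (Subtype.val ∘ f) =
        (P * U).submatrix id (Subtype.val ∘ f) := by
      rw [submatrix_mul _ _ _ id _ Function.bijective_id, submatrix_id_id]
    rw [hPU, hP.mul_eigenvectorUnitary]
    ext i t
    have hft := (hP.eigenvalues_eq_zero_or_one hPP (f t)).resolve_left (f t).2
    simp [hft, U]

end Projections

end Matrix

section Codes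

variable {m ι κ J 𝕜 : Type*} [RCLike 𝕜] [Fintype m] [DecidableEq ι] [Fintype κ]
  [DecidableEq κ]

structure IsHybridCode (P : ι → Matrix m m 𝕜) (k : ℕ) (A : J → Matrix m m 𝕜)
    (lam : J → ι → 𝕜) : Prop where
  isHermitian : ∀ r, (P r).IsHermitian
  mul_self : ∀ r, P r * P r = P r
  rank_eq : ∀ r, (P r).rank = k
  mul_eq_zero : ∀ r s, r ≠ s → P r * P s = 0
  mul_mul : ∀ j r s, P r * A j * P s = if r = s then lam j r • P r else 0

/-- The isometric form of `IsHybridCode`: the columns of `W r` are an orthonormal basis of the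
`r`-th code space, and `P r = W r * (W r)ᴴ`. -/
structure IsIsometricHybridCode (W : ι → Matrix m κ 𝕜) (A : J → Matrix m m 𝕜)
    (lam : J → ι → 𝕜) : Prop where
  conjTranspose_mul : ∀ r s, (W r)ᴴ * W s = if r = s then 1 else 0
  conjTranspose_mul_mul : ∀ j r s, (W r)ᴴ * A j * W s = if r = s then lam j r • 1 else 0

open ComplexOrder in
lemma IsIsometricHybridCode.isHybridCode {W : ι → Matrix m κ 𝕜} {A : J → Matrix m m 𝕜}
    {lam : J → ι → 𝕜} (h : IsIsometricHybridCode W A lam) :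
    IsHybridCode (fun r => W r * (W r)ᴴ) (Fintype.card κ) A lam := by
  have hW : ∀ r, (W r)ᴴ * W r = 1 := fun r => by simpa using h.conjTranspose_mul r r
  refine ⟨fun r => isHermitian_mul_conjTranspose_self (W r), fun r => ?_, fun r => ?_,
    fun r s hrs => ?_, fun j r s => ?_⟩
  · rw [Matrix.mul_assoc, ← Matrix.mul_assoc (W r)ᴴ, hW, Matrix.one_mul]
  · rw [rank_self_mul_conjTranspose, ← rank_conjTranspose_mul_self, hW, rank_one]
  · rw [Matrix.mul_assoc, ← Matrix.mul_assoc (W r)ᴴ, h.conjTranspose_mul, if_neg hrs,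
      Matrix.zero_mul, Matrix.mul_zero]
  · have hblock :
        W r * (W r)ᴴ * A j * (W s * (W s)ᴴ) = W r * ((W r)ᴴ * A j * W s) * (W s)ᴴ := by
      simp only [Matrix.mul_assoc]
    rw [hblock, h.conjTranspose_mul_mul]
    split_ifs with hrs
    · rw [Matrix.mul_smul, Matrix.mul_one, Matrix.smul_mul, hrs]
    · rw [Matrix.mul_zero, Matrix.zero_mul]

lemma IsHybridCode.exists_isIsometricHybridCode [DecidableEq m] {P : ι → Matrix m m 𝕜}
    {A : J → Matrix m m 𝕜} {lam : J → ι → 𝕜}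
    (h : IsHybridCode P (Fintype.card κ) A lam) :
    ∃ W : ι → Matrix m κ 𝕜, IsIsometricHybridCode W A lam := by
  choose W hW hPW using fun r =>
    (h.isHermitian r).exists_isometry_mul_eq_self (h.mul_self r) (h.rank_eq r).ge
  have hWP : ∀ r, (W r)ᴴ * P r = (W r)ᴴ := fun r => by
    rw [← (h.isHermitian r).eq, ← conjTranspose_mul, hPW]
  have compress : ∀ X r s, (W r)ᴴ * X * W s = (W r)ᴴ * (P r * X * P s) * W s := by
    intro X r s
    calc (W r)ᴴ * X * W s = ((W r)ᴴ * P r) * X * (P s * W s) := by rw [hWP, hPW]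
      _ = (W r)ᴴ * (P r * X * P s) * W s := by simp only [Matrix.mul_assoc]
  refine ⟨W, fun r s => ?_, fun j r s => ?_⟩
  · split_ifs with hrs
    · rw [hrs, hW]
    · rw [← Matrix.mul_one (W r)ᴴ, compress, Matrix.mul_one, h.mul_eq_zero r s hrs,
        Matrix.mul_zero, Matrix.zero_mul]
  · rw [compress, h.mul_mul]
    split_ifs with hrs
    · rw [Matrix.mul_smul, Matrix.smul_mul, hWP, hrs, hW]
    · rw [Matrix.mul_zero, Matrix.zero_mul]

end Codes

section MatricialRange

variable {I J : Type*} [Fintype I] {k p : ℕ} {A : J → Matrix I I ℂ}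

lemma IsIsometricHybridCode.diagonal_mem_matricialRange {W : Fin p → Matrix I (Fin k) ℂ}
    {lam : J → Fin p → ℂ} (h : IsIsometricHybridCode W A lam) :
    (fun j => diagonal (lam j)) ∈ matricialRange k p A :=
  ⟨fun _ => isDiag_diagonal _, of fun i rt => W rt.1 i rt.2,
    (conjTranspose_mul_self_eq_one_iff _).mpr h.conjTranspose_mul,
    fun j => (conjTranspose_mul_mul_eq_diagonal_kronecker_one_iff _ _ _).mpr
      (h.conjTranspose_mul_mul j)⟩

lemma exists_isIsometricHybridCode_of_mem_matricialRange {D : J → Matrix (Fin p) (Fin p) ℂ}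
    (hD : D ∈ matricialRange k p A) :
    ∃ W : Fin p → Matrix I (Fin k) ℂ, IsIsometricHybridCode W A (fun j r => D j r r) := by
  obtain ⟨hdiag, V, hV, hVA⟩ := hD
  refine ⟨fun r => V.submatrix id (Prod.mk r), (conjTranspose_mul_self_eq_one_iff V).mp hV,
    fun j => ?_⟩
  have hVAj := hVA j
  rw [← (hdiag j).diagonal_diag] at hVAj
  exact (conjTranspose_mul_mul_eq_diagonal_kronecker_one_iff _ _ _).mp hVAj

end MatricialRange

theorem stmt9_general (n c k p : ℕ)
    (E : Fin c → Matrix (Fin n) (Fin n) ℂ) :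
    (∃ P : Fin p → Matrix (Fin n) (Fin n) ℂ,
        (∀ r, (P r).IsHermitian) ∧ (∀ r, P r * P r = P r) ∧ (∀ r, (P r).rank = k) ∧
        (∀ r s, r ≠ s → P r * P s = 0) ∧
        ∃ lam : Fin c → Fin c → Fin p → ℂ,
          ∀ i j r s, P r * ((E i)ᴴ * E j) * P s =
            if r = s then lam i j r • P r else 0) ↔
      (matricialRange k p (fun ij : Fin c × Fin c => (E ij.1)ᴴ * E ij.2)).Nonempty := by
  constructor
  · rintro ⟨P, hP, hPP, hrank, horth, lam, hlam⟩
    have hcode : IsHybridCode P (Fintype.card (Fin k))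
        (fun ij : Fin c × Fin c => (E ij.1)ᴴ * E ij.2) (fun ij => lam ij.1 ij.2) :=
      ⟨hP, hPP, by simpa using hrank, horth, fun ij => hlam ij.1 ij.2⟩
    obtain ⟨W, hW⟩ := hcode.exists_isIsometricHybridCode
    exact ⟨_, hW.diagonal_mem_matricialRange⟩
  · rintro ⟨D, hD⟩
    obtain ⟨W, hW⟩ := exists_isIsometricHybridCode_of_mem_matricialRange hD
    obtain ⟨hP, hPP, hrank, horth, hlam⟩ := hW.isHybridCode
    exact ⟨_, hP, hPP, by simpa using hrank, horth, fun i j r => D (i, j) r r,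
      fun i j r s => hlam (i, j) r s⟩

/-- Lemma 3.3: A quantum channel with Kraus operators `E_1,…,E_c`
(so `Σ_i E_i* E_i = I`) has a hybrid `(k:p)` quantum error correcting code — mutually
orthogonal rank-`k` orthogonal projections `P_1,…,P_p` and scalars `λ_{ij}^{(r)}` with
`P_r E_i* E_j P_s = δ_{rs} λ_{ij}^{(r)} P_r` — if and only if the joint rank
`(k:p)`-matricial range of the `c²`-tuple `(E_i* E_j)_{i,j}` is nonempty. -/
theorem stmt9 (n c k p : ℕ) (hk : 1 ≤ k) (hp : 1 ≤ p)
    (E : Fin c → Matrix (Fin n) (Fin n) ℂ)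
    (hE : ∑ i, (E i)ᴴ * E i = 1) :
    (∃ P : Fin p → Matrix (Fin n) (Fin n) ℂ,
        (∀ r, (P r).IsHermitian) ∧ (∀ r, P r * P r = P r) ∧ (∀ r, (P r).rank = k) ∧
        (∀ r s, r ≠ s → P r * P s = 0) ∧
        ∃ lam : Fin c → Fin c → Fin p → ℂ,
          ∀ i j r s, P r * ((E i)ᴴ * E j) * P s =
            if r = s then lam i j r • P r else 0) ↔
      (matricialRange k p (fun ij : Fin c × Fin c => (E ij.1)ᴴ * E ij.2)).Nonempty :=
  stmt9_general n c k p E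
end

section
/- Let A be an n×n complex Hermitian matrix with eigenvalues a_1 ≥ a_2 ≥ … ≥ a_n (listed in decreasing order), and let k, p ≥ 1 with kp ≤ n. Then the rank-(kp) numerical range satisfies Λ_{kp}(A) = {t ∈ ℝ : a_{n+1−kp} ≤ t ≤ a_{kp}}. -/
/-!
Conjugating by `U` reduces everything to `D = diag(a₀, …, a_{n-1})`. If `V*DV = t I_m` for an
isometry `V`, its `m`-dimensional range meets the span of `e_{m-1}, …, e_{n-1}` nontrivially, and
the Rayleigh quotient of `D` at such a vector is both `t` and at most `a_{m-1}`; applied to `-D`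
the same argument gives `a_{n-m} ≤ t`. Conversely, for `a_{n-m} ≤ t ≤ a_{m-1}` and `j < m`, the
value `t` lies between `a_j` and `a_{n-1-j}`, so `t = v a_j + u a_{n-1-j}` with `u + v = 1`, and
the unit vectors `√v e_j + √u e_{n-1-j}` have disjoint supports: they form the columns of `V`.
When the mirror index `n-1-j` is itself `< m`, one has `a_j = t` and the column is just `e_j`.
-/

open Matrix

namespace Matrix

variable {ι κ : Type*} [Fintype ι]

def rankNumericalRange (m : ℕ) (A : Matrix ι ι ℂ) : Set ℂ :=
  {t | ∃ V : Matrix ι (Fin m) ℂ, Vᴴ * V = 1 ∧ Vᴴ * A * V = t • 1}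

theorem rankNumericalRange_conjTranspose_mul_mul_subset [Fintype κ] [DecidableEq κ]
    {W : Matrix ι κ ℂ} (hW : Wᴴ * W = 1) (m : ℕ) (A : Matrix ι ι ℂ) :
    rankNumericalRange m (Wᴴ * A * W) ⊆ rankNumericalRange m A := by
  rintro t ⟨V, hV, hAV⟩
  refine ⟨W * V, ?_, ?_⟩
  · rw [conjTranspose_mul, Matrix.mul_assoc, ← Matrix.mul_assoc Wᴴ, hW, Matrix.one_mul, hV]
  · simpa only [conjTranspose_mul, Matrix.mul_assoc] using hAV

theorem rankNumericalRange_unitary_conj [DecidableEq ι] {U : Matrix ι ι ℂ} (hU₁ : Uᴴ * U = 1)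
    (hU₂ : U * Uᴴ = 1) (m : ℕ) (A : Matrix ι ι ℂ) :
    rankNumericalRange m (U * A * Uᴴ) = rankNumericalRange m A := by
  refine subset_antisymm ?_ ?_
  · have := rankNumericalRange_conjTranspose_mul_mul_subset (W := Uᴴ)
      (by rwa [conjTranspose_conjTranspose]) m A
    rwa [conjTranspose_conjTranspose] at this
  · have hA : Uᴴ * (U * A * Uᴴ) * U = A := by
      rw [← Matrix.mul_assoc, ← Matrix.mul_assoc, hU₁, Matrix.one_mul, Matrix.mul_assoc, hU₁,
        Matrix.mul_one]
    have := rankNumericalRange_conjTranspose_mul_mul_subset hU₁ m (U * A * Uᴴ)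
    rwa [hA] at this

theorem neg_mem_rankNumericalRange_neg {m : ℕ} {A : Matrix ι ι ℂ} {t : ℂ}
    (ht : t ∈ rankNumericalRange m A) : -t ∈ rankNumericalRange m (-A) := by
  obtain ⟨V, hV, hAV⟩ := ht
  exact ⟨V, hV, by rw [Matrix.mul_neg, Matrix.neg_mul, hAV, neg_smul]⟩

theorem exists_ne_zero_mulVec_eq_zero_on {K : Type*} [Field K] [Fintype κ] (V : Matrix ι κ K)
    (s : Finset ι) (hs : s.card < Fintype.card κ) :
    ∃ x ≠ 0, ∀ i ∈ s, (V *ᵥ x) i = 0 := by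
  let f : (κ → K) →ₗ[K] (s → K) := LinearMap.funLeft K K Subtype.val ∘ₗ V.mulVecLin
  have hker : LinearMap.ker f ≠ ⊥ :=
    LinearMap.ker_ne_bot_of_finrank_lt (by simpa [Module.finrank_fintype_fun_eq_card] using hs)
  obtain ⟨x, hx, hx0⟩ := Submodule.exists_mem_ne_zero_of_ne_bot hker
  exact ⟨x, hx0, fun i hi => congrFun (LinearMap.mem_ker.mp hx) ⟨i, hi⟩⟩

theorem star_mulVec_dotProduct_mulVec_mulVec {R : Type*} [CommSemiring R] [StarRing R]
    [Fintype κ] (V : Matrix ι κ R) (A : Matrix ι ι R) (x : κ → R) :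
    star (V *ᵥ x) ⬝ᵥ (A *ᵥ (V *ᵥ x)) = star x ⬝ᵥ ((Vᴴ * A * V) *ᵥ x) := by
  rw [star_mulVec, mulVec_mulVec, dotProduct_mulVec, vecMul_vecMul, ← dotProduct_mulVec,
    Matrix.mul_assoc]

theorem star_dotProduct_diagonal_ofReal_mulVec [DecidableEq ι] (d : ι → ℝ) (w : ι → ℂ) :
    star w ⬝ᵥ (diagonal (fun i => (d i : ℂ)) *ᵥ w) =
      ((∑ i, d i * Complex.normSq (w i) : ℝ) : ℂ) := by
  push_cast
  simp only [dotProduct, mulVec_diagonal, Pi.star_apply, RCLike.star_def,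
    Complex.normSq_eq_conj_mul_self]
  exact Finset.sum_congr rfl fun i _ => by ring

theorem star_dotProduct_self_eq_ofReal_sum_normSq (w : ι → ℂ) :
    star w ⬝ᵥ w = ((∑ i, Complex.normSq (w i) : ℝ) : ℂ) := by
  push_cast
  simp [dotProduct, Complex.normSq_eq_conj_mul_self]

theorem exists_eq_ofReal_le_of_mem_rankNumericalRange_diagonal [DecidableEq ι] {m : ℕ}
    {d : ι → ℝ} {t : ℂ} (ht : t ∈ rankNumericalRange m (diagonal fun i => (d i : ℂ)))
    {s : Finset ι} (hs : s.card < m) {c : ℝ} (hc : ∀ i ∉ s, d i ≤ c) :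
    ∃ r : ℝ, t = r ∧ r ≤ c := by
  obtain ⟨V, hV, hD⟩ := ht
  obtain ⟨x, hx, hVx⟩ := exists_ne_zero_mulVec_eq_zero_on V s (by simpa using hs)
  have hw : V *ᵥ x ≠ 0 := fun h => hx <| by
    rw [← one_mulVec x, ← hV, ← mulVec_mulVec, h, mulVec_zero]
  set S := ∑ i, Complex.normSq ((V *ᵥ x) i)
  set R := ∑ i, d i * Complex.normSq ((V *ᵥ x) i)
  have hS : 0 < S := by
    obtain ⟨i, hi⟩ := Function.ne_iff.mp hw
    exact Finset.sum_pos' (fun j _ => Complex.normSq_nonneg _)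
      ⟨i, Finset.mem_univ i, Complex.normSq_pos.mpr hi⟩
  have hRS : t * S = R := by
    have hquad := star_mulVec_dotProduct_mulVec_mulVec V (diagonal fun i => (d i : ℂ)) x
    have hnorm := star_mulVec_dotProduct_mulVec_mulVec V 1 x
    rw [Matrix.mul_one, hV, one_mulVec, one_mulVec] at hnorm
    rw [hD, smul_mulVec, one_mulVec, dotProduct_smul, smul_eq_mul, ← hnorm,
      star_dotProduct_diagonal_ofReal_mulVec, star_dotProduct_self_eq_ofReal_sum_normSq] at hquad
    exact hquad.symm
  have hRc : R ≤ c * S := by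
    rw [Finset.mul_sum]
    refine Finset.sum_le_sum fun i _ => ?_
    by_cases hi : i ∈ s
    · simp [hVx i hi]
    · exact mul_le_mul_of_nonneg_right (hc i hi) (Complex.normSq_nonneg _)
  refine ⟨R / S, ?_, (div_le_iff₀ hS).mpr hRc⟩
  rw [Complex.ofReal_div, eq_div_iff (by exact_mod_cast hS.ne'), hRS]

theorem rankNumericalRange_diagonal_subset {n m : ℕ} (hm : 1 ≤ m) (hmn : m ≤ n) {a : ℕ → ℝ}
    (ha : Antitone a) :
    rankNumericalRange m (diagonal fun i : Fin n => (a i : ℂ)) ⊆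
      Complex.ofReal '' Set.Icc (a (n - m)) (a (m - 1)) := by
  intro t ht
  obtain ⟨r, rfl, hr⟩ := exists_eq_ofReal_le_of_mem_rankNumericalRange_diagonal ht
    (s := Finset.Iio ⟨m - 1, by omega⟩) (by rw [Fin.card_Iio, Fin.val_mk]; omega)
    fun i hi => ha (by rw [Finset.mem_Iio, not_lt, Fin.le_def] at hi; omega)
  obtain ⟨r', hr', hr'le⟩ := exists_eq_ofReal_le_of_mem_rankNumericalRange_diagonal
    (d := fun i : Fin n => -a i)
    (by simpa [diagonal_neg] using neg_mem_rankNumericalRange_neg ht)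
    (s := Finset.Ioi ⟨n - m, by omega⟩) (by rw [Fin.card_Ioi, Fin.val_mk]; omega)
    fun i hi => neg_le_neg (ha (by rw [Finset.mem_Ioi, not_lt, Fin.le_def] at hi; omega))
  have hrr' : r = -r' := by
    rw [neg_eq_iff_eq_neg] at hr'
    exact_mod_cast hr'
  exact ⟨r, ⟨by linarith, hr⟩, rfl⟩

theorem conjTranspose_mul_diagonal_mul_of_disjoint {R : Type*} [CommSemiring R] [StarRing R]
    [DecidableEq ι] [Fintype κ] [DecidableEq κ] {W : Matrix ι κ R}
    (hW : ∀ i j l, W i j ≠ 0 → W i l ≠ 0 → j = l) (d : ι → R) :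
    Wᴴ * diagonal d * W = diagonal fun j => ∑ i, star (W i j) * d i * W i j := by
  ext j l
  simp only [mul_apply (M := _ * _), mul_diagonal, conjTranspose_apply, diagonal_apply]
  split_ifs with hjl
  · rw [hjl]
  · refine Finset.sum_eq_zero fun i _ => ?_
    by_cases hij : W i j = 0
    · simp [hij]
    · simp [show W i l = 0 from not_not.mp fun hil => hjl (hW i j l hij hil)]

theorem _root_.Antitone.exists_convex_combination_mirror_eq {n m : ℕ} {a : ℕ → ℝ}
    (ha : Antitone a) {s : ℝ} (hs : s ∈ Set.Icc (a (n - m)) (a (m - 1))) {j : ℕ} (hj : j < m) :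
    ∃ u v : ℝ, 0 ≤ u ∧ 0 ≤ v ∧ u + v = 1 ∧ u * a (n - 1 - j) + v * a j = s ∧
      (n - m ≤ j → u = 0) := by
  by_cases hjn : j < n - m
  · obtain ⟨u, v, hu, hv, huv, hcomb⟩ := Icc_subset_segment (𝕜 := ℝ)
      ⟨hs.1.trans' (ha (show n - m ≤ n - 1 - j by omega)),
        hs.2.trans (ha (show j ≤ m - 1 by omega))⟩
    exact ⟨u, v, hu, hv, huv, hcomb, fun h => absurd h (by omega)⟩
  · have has : a j = s := le_antisymm ((ha (show n - m ≤ j by omega)).trans hs.1)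
      (hs.2.trans (ha (show j ≤ m - 1 by omega)))
    exact ⟨0, 1, le_rfl, zero_le_one, by ring, by rw [has]; ring, fun _ => rfl⟩

section mirrorColumns

variable {n m : ℕ} {u v : Fin m → ℝ}

noncomputable def mirrorColumns (n m : ℕ) (u v : Fin m → ℝ) : Matrix (Fin n) (Fin m) ℂ :=
  of fun i j =>
    ((if (i : ℕ) = j then √(v j) else if (i : ℕ) = n - 1 - j then √(u j) else 0 : ℝ) : ℂ)

theorem mirrorColumns_support (hu₀ : ∀ j : Fin m, n - m ≤ j → u j = 0) {i : Fin n} {j : Fin m}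
    (h : mirrorColumns n m u v i j ≠ 0) :
    (i : ℕ) = j ∨ ((i : ℕ) = n - 1 - j ∧ (j : ℕ) < n - m) := by
  simp only [mirrorColumns, of_apply, ne_eq, Complex.ofReal_eq_zero] at h
  split_ifs at h with h₁ h₂
  · exact Or.inl h₁
  · refine Or.inr ⟨h₂, not_le.mp fun hj => h ?_⟩
    rw [hu₀ j hj, Real.sqrt_zero]
  · exact absurd rfl h

theorem mirrorColumns_disjoint (hu₀ : ∀ j : Fin m, n - m ≤ j → u j = 0) (i : Fin n) (j l : Fin m)
    (hij : mirrorColumns n m u v i j ≠ 0) (hil : mirrorColumns n m u v i l ≠ 0) : j = l := by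
  have := j.2
  have := l.2
  rcases mirrorColumns_support hu₀ hij with h | h <;>
    rcases mirrorColumns_support hu₀ hil with h' | h' <;> exact Fin.ext (by omega)

theorem sum_star_mirrorColumns_mul_mul (hmn : m ≤ n) (hu : ∀ j, 0 ≤ u j) (hv : ∀ j, 0 ≤ v j)
    (hu₀ : ∀ j : Fin m, n - m ≤ j → u j = 0) (f : ℕ → ℝ) (j : Fin m) :
    ∑ i : Fin n, star (mirrorColumns n m u v i j) * (f i : ℂ) * mirrorColumns n m u v i j =
      ((v j * f j + u j * f (n - 1 - j) : ℝ) : ℂ) := by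
  set w : Fin n → ℝ := fun i =>
    if (i : ℕ) = j then √(v j) else if (i : ℕ) = n - 1 - j then √(u j) else 0 with hw
  have hreal : ∀ i, star (mirrorColumns n m u v i j) * (f i : ℂ) * mirrorColumns n m u v i j =
      ((w i ^ 2 * f i : ℝ) : ℂ) := by
    intro i
    simp only [mirrorColumns, of_apply, RCLike.star_def, Complex.conj_ofReal]
    push_cast
    ring
  rw [Finset.sum_congr rfl fun i _ => hreal i, ← Complex.ofReal_sum]
  congr 1
  by_cases hj : (j : ℕ) < n - m
  · rw [Fintype.sum_eq_add ⟨j, by omega⟩ ⟨n - 1 - j, by omega⟩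
      (by simp only [Ne, Fin.ext_iff]; omega)]
    · simp [hw, show n - 1 - (j : ℕ) ≠ j by omega, Real.sq_sqrt (hu j), Real.sq_sqrt (hv j)]
    · rintro i ⟨hij, hij'⟩
      rw [Ne, Fin.ext_iff] at hij hij'
      simp [hw, hij, hij']
  · rw [hu₀ j (by omega), Fintype.sum_eq_single ⟨j, by omega⟩]
    · simp [hw, Real.sq_sqrt (hv j)]
    · intro i hij
      rw [Ne, Fin.ext_iff] at hij
      simp [hw, hij, hu₀ j (by omega)]

end mirrorColumns

theorem ofReal_mem_rankNumericalRange_diagonal {n m : ℕ} (hmn : m ≤ n) {a : ℕ → ℝ}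
    (ha : Antitone a) {s : ℝ} (hs : s ∈ Set.Icc (a (n - m)) (a (m - 1))) :
    (s : ℂ) ∈ rankNumericalRange m (diagonal fun i : Fin n => (a i : ℂ)) := by
  choose u v hu hv huv hcomb hu₀ using
    fun j : Fin m => ha.exists_convex_combination_mirror_eq hs j.2
  have hcol := sum_star_mirrorColumns_mul_mul hmn hu hv hu₀
  have hdisj := mirrorColumns_disjoint (n := n) (v := v) hu₀
  refine ⟨mirrorColumns n m u v, ?_, ?_⟩
  · have h := conjTranspose_mul_diagonal_mul_of_disjoint hdisj 1
    rw [diagonal_one', Matrix.mul_one] at h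
    rw [h, ← diagonal_one]
    congr 1 with j
    convert hcol (fun _ => 1) j using 1
    · simp
    · simp [add_comm (v j), huv]
  · rw [conjTranspose_mul_diagonal_mul_of_disjoint hdisj, smul_one_eq_diagonal]
    congr 1 with j
    rw [hcol a j, add_comm, hcomb]

theorem rankNumericalRange_diagonal {n m : ℕ} (hm : 1 ≤ m) (hmn : m ≤ n) {a : ℕ → ℝ}
    (ha : Antitone a) :
    rankNumericalRange m (diagonal fun i : Fin n => (a i : ℂ)) =
      Complex.ofReal '' Set.Icc (a (n - m)) (a (m - 1)) :=
  (rankNumericalRange_diagonal_subset hm hmn ha).antisymm <| by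
    rintro _ ⟨s, hs, rfl⟩
    exact ofReal_mem_rankNumericalRange_diagonal hmn ha hs

end Matrix

theorem stmt11_general (n k p : ℕ) (hk : 1 ≤ k) (hp : 1 ≤ p) (hkp : k * p ≤ n)
    (A : Matrix (Fin n) (Fin n) ℂ)
    (a : ℕ → ℝ) (ha : Antitone a)
    (U : Matrix (Fin n) (Fin n) ℂ) (hU : Uᴴ * U = 1 ∧ U * Uᴴ = 1)
    (hAa : A = U * Matrix.diagonal (fun i : Fin n => ((a i : ℝ) : ℂ)) * Uᴴ) :
    {t : ℂ | ∃ V : Matrix (Fin n) (Fin (k * p)) ℂ, Vᴴ * V = 1 ∧ Vᴴ * A * V = t • 1}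
      = {t : ℂ | ∃ s : ℝ, t = (s : ℂ) ∧ a (n - k * p) ≤ s ∧ s ≤ a (k * p - 1)} := by
  change rankNumericalRange (k * p) A = _
  rw [hAa, rankNumericalRange_unitary_conj hU.1 hU.2,
    rankNumericalRange_diagonal (Nat.mul_pos hk hp) hkp ha]
  ext t
  constructor
  · rintro ⟨s, hs, rfl⟩
    exact ⟨s, rfl, hs⟩
  · rintro ⟨s, rfl, hs⟩
    exact ⟨s, hs, rfl⟩

/-- Proposition 4.1, first part: Let `A` be an `n × n` Hermitian matrix
with eigenvalues `a_1 ≥ a_2 ≥ … ≥ a_n` (encoded by an antitone `a : ℕ → ℝ`, 0-indexed, and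
a unitary `U` with `A = U diag(a_0,…,a_{n-1}) U*`), and let `k, p ≥ 1` with `kp ≤ n`. Then
the rank-`kp` numerical range is `Λ_{kp}(A) = {t ∈ ℝ : a_{n+1-kp} ≤ t ≤ a_{kp}}`
(in 0-indexed form, `a (n - kp) ≤ t ≤ a (kp - 1)`). -/
theorem stmt11 (n k p : ℕ) (hk : 1 ≤ k) (hp : 1 ≤ p) (hkp : k * p ≤ n)
    (A : Matrix (Fin n) (Fin n) ℂ) (hA : A.IsHermitian)
    (a : ℕ → ℝ) (ha : Antitone a)
    (U : Matrix (Fin n) (Fin n) ℂ) (hU : Uᴴ * U = 1 ∧ U * Uᴴ = 1)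
    (hAa : A = U * Matrix.diagonal (fun i : Fin n => ((a i : ℝ) : ℂ)) * Uᴴ) :
    {t : ℂ | ∃ V : Matrix (Fin n) (Fin (k * p)) ℂ, Vᴴ * V = 1 ∧ Vᴴ * A * V = t • 1}
      = {t : ℂ | ∃ s : ℝ, t = (s : ℂ) ∧ a (n - k * p) ≤ s ∧ s ≤ a (k * p - 1)} :=
  stmt11_general n k p hk hp hkp A a ha U hU hAa
end

section
/- For i = 1,…,m let A_i = diag(a^i_1, a^i_2, …, a^i_n) be an n×n real diagonal matrix, and for j = 1,…,n let a_j = (a^1_j, a^2_j, …, a^m_j) ∈ ℝ^m. For S ⊆ {1,…,n} let X_S = conv{a_j : j ∈ S} be the convex hull. Then for every 1 ≤ k ≤ n, the joint rank-k numerical range satisfies Λ_k(A_1,…,A_m) ⊆ ⋂ {X_S : S ⊆ {1,…,n}, |S| = n−k+1}. -/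
open Matrix Kronecker

/-- Proposition 4.3: For real diagonal matrices
`A_i = diag(a^i_1,…,a^i_n)`, with column points `a_j = (a^1_j,…,a^m_j) ∈ ℝ^m` and
`X_S = conv{a_j : j ∈ S}`, every element of the joint rank-`k` numerical range lies in
`X_S` for every subset `S ⊆ {1,…,n}` of cardinality `n - k + 1`. -/
theorem stmt13 (n m k : ℕ) (hk : 1 ≤ k) (hkn : k ≤ n)
    (d : Fin m → Fin n → ℝ)
    (x : Fin m → ℂ)
    (hx : x ∈ jointRankRangeP k (fun i => Matrix.diagonal fun j => ((d i j : ℝ) : ℂ)))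
    (S : Finset (Fin n)) (hS : S.card = n - k + 1) :
    x ∈ convexHull ℝ ((fun j : Fin n => fun i : Fin m => ((d i j : ℝ) : ℂ)) '' ↑S) := by
  classical
  obtain ⟨P, hherm, hidem, hrank, heq⟩ := hx
  set Q : Matrix (Fin n) (Fin n) ℂ :=
    Matrix.diagonal (fun j => if j ∈ S then (1:ℂ) else 0) with hQ
  have hrankQ : Q.rank = S.card := by
    rw [hQ, Matrix.rank_diagonal]
    rw [Fintype.card_subtype]
    congr 1
    ext j
    simp only [Finset.mem_filter, Finset.mem_univ, true_and]
    split <;> simp_all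
  set p : Submodule ℂ (Fin n → ℂ) := LinearMap.range P.mulVecLin with hp
  set q : Submodule ℂ (Fin n → ℂ) := LinearMap.range Q.mulVecLin with hq
  have hfp : Module.finrank ℂ p = k := hrank
  have hfq : Module.finrank ℂ q = n - k + 1 := by rw [← hS]; exact hrankQ
  have hsup : Module.finrank ℂ ↥(p ⊔ q) ≤ n := by
    have h1 := Submodule.finrank_le (p ⊔ q)
    rwa [Module.finrank_fintype_fun_eq_card, Fintype.card_fin] at h1
  have hsum := Submodule.finrank_sup_add_finrank_inf_eq p q
  have hpos : 0 < Module.finrank ℂ ↥(p ⊓ q) := by omega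
  have hne : p ⊓ q ≠ ⊥ := by
    intro h
    rw [h, finrank_bot] at hpos
    omega
  obtain ⟨v, hv, hv0⟩ := Submodule.exists_mem_ne_zero_of_ne_bot hne
  obtain ⟨w1, hw1⟩ := hv.1
  obtain ⟨w2, hw2⟩ := hv.2
  have hPv : P *ᵥ v = v := by
    rw [← hw1]
    simp only [Matrix.mulVecLin_apply, Matrix.mulVec_mulVec, hidem]
  have hsupp : ∀ j, j ∉ S → v j = 0 := by
    intro j hj
    rw [← hw2]
    simp [Matrix.mulVecLin_apply, hQ, Matrix.mulVec_diagonal, hj]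
  have hvP : star v ᵥ* P = star v := by
    calc star v ᵥ* P = star v ᵥ* (Pᴴ)ᴴ := by rw [Matrix.conjTranspose_conjTranspose]
    _ = star (Pᴴ *ᵥ v) := (Matrix.star_mulVec _ _).symm
    _ = star (P *ᵥ v) := by rw [hherm]
    _ = star v := by rw [hPv]
  have hstar : ∀ w : Fin n → ℂ, star v ⬝ᵥ (P *ᵥ w) = star v ⬝ᵥ w := by
    intro w
    rw [Matrix.dotProduct_mulVec, hvP]
  have key : ∀ i, star v ⬝ᵥ ((Matrix.diagonal fun j => ((d i j : ℝ):ℂ)) *ᵥ v)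
      = x i * (star v ⬝ᵥ v) := by
    intro i
    have h1 := congrArg (fun M => star v ⬝ᵥ (M *ᵥ v)) (heq i)
    simp only at h1
    rw [← Matrix.mulVec_mulVec, ← Matrix.mulVec_mulVec, hPv, hstar,
      Matrix.smul_mulVec, dotProduct_smul, hPv, smul_eq_mul] at h1
    exact h1
  set t : ℝ := ∑ j ∈ S, Complex.normSq (v j) with ht
  have hdot : star v ⬝ᵥ v = (t : ℂ) := by
    rw [ht]
    push_cast
    rw [dotProduct]
    rw [← Finset.sum_subset (Finset.subset_univ S) (by
      intro j _ hj
      rw [hsupp j hj]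
      simp)]
    refine Finset.sum_congr rfl fun j _ => ?_
    simp only [Pi.star_apply, Complex.star_def]
    rw [← Complex.normSq_eq_conj_mul_self]
  have hsum1 : ∀ i, ∑ j ∈ S, (Complex.normSq (v j) : ℂ) * ((d i j : ℝ) : ℂ)
      = x i * (t : ℂ) := by
    intro i
    rw [← hdot, ← key i, dotProduct]
    rw [← Finset.sum_subset (Finset.subset_univ S) (by
      intro j _ hj
      rw [Matrix.mulVec_diagonal, hsupp j hj]
      simp)]
    refine Finset.sum_congr rfl fun j _ => ?_
    rw [Matrix.mulVec_diagonal]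
    simp only [Pi.star_apply, Complex.star_def]
    rw [Complex.normSq_eq_conj_mul_self]
    ring
  have htpos : 0 < t := by
    obtain ⟨j, hj⟩ := Function.ne_iff.mp hv0
    have hjS : j ∈ S := by
      by_contra h
      exact hj (hsupp j h)
    refine Finset.sum_pos' (fun j _ => Complex.normSq_nonneg _) ⟨j, hjS, ?_⟩
    simpa [Complex.normSq_pos] using hj
  have hxcm : x = S.centerMass (fun j => Complex.normSq (v j))
      (fun j : Fin n => fun i : Fin m => ((d i j : ℝ) : ℂ)) := by
    funext i
    rw [Finset.centerMass]
    simp only [Finset.sum_apply, Pi.smul_apply, Complex.real_smul]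
    rw [← ht, hsum1 i]
    rw [mul_comm (x i) _, ← mul_assoc, ← Complex.ofReal_mul,
      inv_mul_cancel₀ (ne_of_gt htpos)]
    simp
  rw [hxcm]
  exact Finset.centerMass_mem_convexHull S (fun j _ => Complex.normSq_nonneg _)
    (by rw [← ht]; exact htpos) (fun j hj => Set.mem_image_of_mem _ hj)
end

section
/- The bound (m+1)k − m is best possible for joint rank-k numerical ranges of diagonal tuples: for every m, k ≥ 1 and every n with n < (m+1)k − m, there exist n×n real diagonal matrices A_1,…,A_m such that the joint rank-k numerical range Λ_k(A_1,…,A_m) is empty. -/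
open Matrix Kronecker

lemma rank_smul_aux {n : ℕ} (c : ℂ) (hc : c ≠ 0) (P : Matrix (Fin n) (Fin n) ℂ) :
    (c • P).rank = P.rank := by
  have h : c • P = (c • (1 : Matrix (Fin n) (Fin n) ℂ)) * P := by
    rw [Matrix.smul_mul, one_mul]
  rw [h, Matrix.rank_mul_eq_right_of_isUnit_det]
  simp [Matrix.det_smul, hc]

lemma diag_sandwich_aux {n k K : ℕ} (hKk : K < k) (P : Matrix (Fin n) (Fin n) ℂ)
    (hrk : P.rank = k) (w : Fin n → ℂ) (a : ℕ)
    (hw : ∀ i : Fin n, w i ≠ 0 → a ≤ (i : ℕ) ∧ (i : ℕ) < a + K)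
    (c : ℂ) (h : P * Matrix.diagonal w * P = c • P) : c = 0 := by
  classical
  by_contra hc
  have hcard : Fintype.card {i : Fin n // w i ≠ 0} ≤ K := by
    have hinj : Function.Injective (fun p : {i : Fin n // w i ≠ 0} =>
        (⟨((p : Fin n) : ℕ) - a, by obtain ⟨h1, h2⟩ := hw p p.2; omega⟩ : Fin K)) := by
      intro p q hpq
      obtain ⟨h1, h2⟩ := hw p p.2
      obtain ⟨h3, h4⟩ := hw q q.2
      rw [Fin.mk.injEq] at hpq
      exact Subtype.ext (Fin.ext (by omega))
    simpa using Fintype.card_le_of_injective _ hinj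
  have hr1 : (P * Matrix.diagonal w * P).rank ≤ K := by
    calc (P * Matrix.diagonal w * P).rank ≤ (P * Matrix.diagonal w).rank :=
          Matrix.rank_mul_le_left _ _
      _ ≤ (Matrix.diagonal w).rank := Matrix.rank_mul_le_right _ _
      _ ≤ K := by rw [Matrix.rank_diagonal]; exact le_trans (le_of_eq (by convert rfl)) hcard
  rw [h, rank_smul_aux c hc P, hrk] at hr1
  omega


/-- Proposition 4.5 (1), sharpness: the bound `(m+1)k - m` is best
possible: for every `m, k ≥ 1` and every `n < (m+1)k - m` there exist `n × n` real
diagonal matrices `A_1,…,A_m` whose joint rank-`k` numerical range is empty. -/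
theorem stmt15 (m k : ℕ) (hm : 1 ≤ m) (hk : 1 ≤ k) (n : ℕ) (hn : n < (m + 1) * k - m) :
    ∃ d : Fin m → Fin n → ℝ,
      jointRankRangeP k (fun i => Matrix.diagonal fun j => ((d i j : ℝ) : ℂ)) = ∅ := by
  classical
  obtain ⟨K, rfl⟩ : ∃ K, k = K + 1 := ⟨k - 1, by omega⟩
  set k := K + 1 with hkdef
  have hmul : (m + 1) * k = (m + 1) * K + (m + 1) := by rw [hkdef]; ring
  have hnK : n ≤ (m + 1) * K := by omega
  refine ⟨fun j i => if (j : ℕ) * K ≤ (i : ℕ) ∧ (i : ℕ) < (j : ℕ) * K + K then 1 else 0, ?_⟩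
  ext x
  simp only [Set.mem_empty_iff_false, iff_false, jointRankRangeP, Set.mem_setOf_eq]
  rintro ⟨P, hH, hP2, hrk, hA⟩
  -- if n < k, rank is too small
  have hkn : k ≤ n := by
    by_contra hkn
    have := Matrix.rank_le_card_width P
    simp only [Fintype.card_fin] at this
    omega
  have hK0 : 0 < K := by
    rcases Nat.eq_zero_or_pos K with h0 | h0
    · rw [h0, Nat.mul_zero] at hnK; omega
    · exact h0
  have hKk : K < k := by omega
  -- the entry functions, as complex functions
  set w : Fin m → Fin n → ℂ := fun j i =>
    if (j : ℕ) * K ≤ (i : ℕ) ∧ (i : ℕ) < (j : ℕ) * K + K then 1 else 0 with hw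
  have hcast : ∀ j : Fin m, (fun i : Fin n =>
      ((((if (j : ℕ) * K ≤ (i : ℕ) ∧ (i : ℕ) < (j : ℕ) * K + K then (1:ℝ) else 0) : ℝ)) : ℂ))
      = w j := by
    intro j; funext i
    by_cases h : (j : ℕ) * K ≤ (i : ℕ) ∧ (i : ℕ) < (j : ℕ) * K + K <;> simp [hw, h]
  -- each x j = 0
  have hx0 : ∀ j : Fin m, x j = 0 := by
    intro j
    have h := hA j
    rw [hcast j] at h
    refine diag_sandwich_aux hKk P hrk (w j) ((j : ℕ) * K) ?_ (x j) h
    intro i hi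
    simp only [hw] at hi
    exact by_contra fun hcon => hi (if_neg hcon)
  -- hence P * A j * P = 0
  have hA0 : ∀ j : Fin m, P * Matrix.diagonal (w j) * P = 0 := by
    intro j
    have h := hA j
    rw [hcast j, hx0 j, zero_smul] at h
    exact h
  -- the complementary diagonal
  set w0 : Fin n → ℂ := fun i => if m * K ≤ (i : ℕ) then 1 else 0 with hw0
  have hsum : Matrix.diagonal w0 + ∑ j : Fin m, Matrix.diagonal (w j)
      = (1 : Matrix (Fin n) (Fin n) ℂ) := by
    ext a b
    by_cases hab : a = b
    · subst hab
      simp only [Matrix.add_apply, Matrix.sum_apply, Matrix.diagonal_apply_eq,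
        Matrix.one_apply_eq]
      rw [hw0, hw]
      by_cases hcase : m * K ≤ (a : ℕ)
      · have : ∀ j : Fin m, (if (j : ℕ) * K ≤ (a : ℕ) ∧ (a : ℕ) < (j : ℕ) * K + K
            then (1:ℂ) else 0) = 0 := by
          intro j
          have hj1 : (j : ℕ) + 1 ≤ m := j.2
          have : (j : ℕ) * K + K ≤ m * K := by
            calc (j : ℕ) * K + K = ((j : ℕ) + 1) * K := by ring
              _ ≤ m * K := Nat.mul_le_mul_right K hj1
          rw [if_neg]
          omega
        simp [hcase, this]
      · -- exactly one j works : j0 = a / K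
        push_neg at hcase
        have hj0m : (a : ℕ) / K < m := by
          by_contra hcon
          push_neg at hcon
          have h1 : m * K ≤ ((a : ℕ) / K) * K := Nat.mul_le_mul_right K hcon
          have h2 : ((a : ℕ) / K) * K ≤ (a : ℕ) := Nat.div_mul_le_self _ _
          omega
        have hkey : ∀ j : Fin m, ((j : ℕ) * K ≤ (a : ℕ) ∧ (a : ℕ) < (j : ℕ) * K + K)
            ↔ j = ⟨(a : ℕ) / K, hj0m⟩ := by
          intro j
          constructor
          · rintro ⟨h1, h2⟩
            have : (a : ℕ) / K = (j : ℕ) :=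
              Nat.div_eq_of_lt_le h1 (by simpa [Nat.succ_mul] using h2)
            exact Fin.ext (by simp [this])
          · rintro rfl
            simp only [Fin.val_mk]
            refine ⟨Nat.div_mul_le_self _ _, ?_⟩
            have h1 := Nat.div_add_mod (a : ℕ) K
            have h2 := Nat.mod_lt (a : ℕ) hK0
            rw [mul_comm]
            omega
        have : ∀ j : Fin m, (if (j : ℕ) * K ≤ (a : ℕ) ∧ (a : ℕ) < (j : ℕ) * K + K
            then (1:ℂ) else 0) = if j = ⟨(a : ℕ) / K, hj0m⟩ then 1 else 0 := by
          intro j; simp only [hkey j]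
        simp only [this]
        rw [Finset.sum_ite_eq' Finset.univ]
        simp [Nat.not_le.mpr hcase]
    · simp [Matrix.diagonal_apply_ne _ hab, Matrix.one_apply_ne hab,
        Matrix.sum_apply, Matrix.diagonal_apply_ne]
  -- derive P * diagonal w0 * P = P
  have hPQ : P * Matrix.diagonal w0 * P = (1 : ℂ) • P := by
    have h1 : P * (Matrix.diagonal w0 + ∑ j : Fin m, Matrix.diagonal (w j)) * P
        = P := by rw [hsum, mul_one, hP2]
    have h2 : P * (Matrix.diagonal w0 + ∑ j : Fin m, Matrix.diagonal (w j)) * P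
        = P * Matrix.diagonal w0 * P + ∑ j : Fin m, P * Matrix.diagonal (w j) * P := by
      rw [mul_add, add_mul, Finset.mul_sum, Finset.sum_mul]
    rw [h2] at h1
    simp only [hA0, Finset.sum_const_zero, add_zero] at h1
    rw [h1, one_smul]
  have : (1 : ℂ) = 0 :=
    diag_sandwich_aux hKk P hrk w0 (m * K)
      (fun i hi => by
        simp only [hw0] at hi
        have hcond : m * K ≤ (i : ℕ) := by
          exact by_contra fun hcon => hi (if_neg hcon)
        have hsplit : (m + 1) * K = m * K + K := by ring
        exact ⟨hcond, by omega⟩) 1 hPQ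
  exact one_ne_zero this
end

section
/- Let m, k, p ≥ 1 and let n satisfy p((m+1)k − m) ≤ n < (m+1)kp − m. Then there exist n×n real diagonal matrices A_1,…,A_m such that the joint rank-(kp) numerical range Λ_{kp}(A_1,…,A_m) is empty while the joint rank (k:p)-matricial range Λ_{(k:p)}(A_1,…,A_m) is non-empty. -/
open Matrix Kronecker

lemma natinj {q v a b : ℕ} (h1 : a/q = v) (h2 : b/q = v) (h3 : a%q = b%q) : a = b := by
  have ha := Nat.div_add_mod a q
  have hb := Nat.div_add_mod b q
  rw [h1, h3] at ha
  rw [h2] at hb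
  exact ha.symm.trans hb

lemma auxCard {n q v : ℕ} (hq : 0 < q) (w : Fin n → ℂ)
    (hw : ∀ j : Fin n, w j ≠ 0 → (j : ℕ) / q = v) :
    Fintype.card {j : Fin n // w j ≠ 0} ≤ q := by
  have hinj : Function.Injective
      (fun x : {j : Fin n // w j ≠ 0} => (⟨(x.1 : ℕ) % q, Nat.mod_lt _ hq⟩ : Fin q)) := by
    intro x y hxy
    have h5 : (x.1 : ℕ) % q = (y.1 : ℕ) % q := congrArg Fin.val hxy
    exact Subtype.ext (Fin.ext (natinj (hw x.1 x.2) (hw y.1 y.2) h5))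
  simpa using Fintype.card_le_of_injective _ hinj

lemma auxZero {n r : ℕ} (V : Matrix (Fin n) (Fin r) ℂ) (w : Fin n → ℂ) (c : ℂ)
    (hcard : Fintype.card {j : Fin n // w j ≠ 0} < r)
    (h : Vᴴ * Matrix.diagonal w * V = c • 1) : c = 0 := by
  by_contra hc
  have h1 : (Vᴴ * Matrix.diagonal w * V).rank ≤ (Matrix.diagonal w).rank :=
    le_trans (Matrix.rank_mul_le_left _ _) (Matrix.rank_mul_le_right _ _)
  rw [h, Matrix.rank_diagonal] at h1
  have h2 : (c • (1 : Matrix (Fin r) (Fin r) ℂ)).rank = r := by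
    rw [Matrix.smul_one_eq_diagonal, Matrix.rank_diagonal,
      Fintype.card_congr (Equiv.subtypeUnivEquiv (fun _ => hc)), Fintype.card_fin]
  omega

lemma auxSel {n : ℕ} {α : Type*} [Fintype α] [DecidableEq α] (e : α → Fin n)
    (he : Function.Injective e) (w : Fin n → ℂ) :
    (Matrix.of fun (j : Fin n) (a : α) => if j = e a then (1:ℂ) else 0)ᴴ * Matrix.diagonal w *
      (Matrix.of fun (j : Fin n) (a : α) => if j = e a then (1:ℂ) else 0)
      = Matrix.diagonal (fun a => w (e a)) := by
  ext a b
  rw [Matrix.mul_assoc]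
  simp only [Matrix.mul_apply, Matrix.conjTranspose_apply, Matrix.of_apply,
    Matrix.diagonal_apply, apply_ite star, star_one, star_zero,
    ite_mul, mul_ite, one_mul, mul_one, zero_mul, mul_zero]
  simp only [Finset.sum_ite_eq', Finset.mem_univ, if_true]
  by_cases hab : a = b
  · subst hab; simp
  · have hne : e a ≠ e b := fun hq => hab (he hq)
    simp [hne, hab]

lemma natuniq {k s t s' t' : ℕ} (ht : t < k) (ht' : t' < k)
    (h : s*k + t = s'*k + t') : s = s' ∧ t = t' := by
  have e1 : (s+1)*k = s*k + k := by ring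
  have e2 : (s'+1)*k = s'*k + k := by ring
  rcases lt_trichotomy s s' with hs | hs | hs
  · exfalso
    have h3 : (s+1)*k ≤ s'*k := Nat.mul_le_mul hs le_rfl
    omega
  · subst hs; exact ⟨rfl, by omega⟩
  · exfalso
    have h3 : (s'+1)*k ≤ s*k := Nat.mul_le_mul hs le_rfl
    omega

lemma natlt {k p s t : ℕ} (hs : s + 1 < p) (ht : t < k) : s*k + t < k*p - 1 := by
  have h1 : (s+2) * k ≤ p * k := Nat.mul_le_mul (by omega) le_rfl
  have h2 : (s+2)*k = s*k + 2*k := by ring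
  have h3 : p*k = k*p := by ring
  omega

lemma sumIndicator {m v : ℕ} :
    (∑ i : Fin m, (if v = (i : ℕ) then (1:ℂ) else 0)) = if v < m then 1 else 0 := by
  by_cases h : v < m
  · rw [if_pos h, Finset.sum_eq_single (⟨v, h⟩ : Fin m)]
    · simp
    · intro b _ hb
      rw [if_neg]
      intro hvb
      exact hb (Fin.ext hvb.symm)
    · simp
  · rw [if_neg h]
    apply Finset.sum_eq_zero
    intro i _
    rw [if_neg]
    intro hvi
    exact h (hvi ▸ i.isLt)

/-- Example 4.7: whenever `p((m+1)k - m) ≤ n < (m+1)kp - m`, there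
exist `n × n` real diagonal matrices `A_1,…,A_m` with empty joint rank-`kp` numerical
range `Λ_{kp}(A)` but nonempty joint rank `(k:p)`-matricial range `Λ_{(k:p)}(A)`. -/
theorem stmt17 (n m k p : ℕ) (hm : 1 ≤ m) (hk : 1 ≤ k) (hp : 1 ≤ p)
    (h1 : p * ((m + 1) * k - m) ≤ n) (h2 : n < (m + 1) * k * p - m) :
    ∃ d : Fin m → Fin n → ℝ,
      jointRankRange (k * p) (fun i => Matrix.diagonal fun j => ((d i j : ℝ) : ℂ)) = ∅ ∧
      (matricialRange k p (fun i => Matrix.diagonal fun j => ((d i j : ℝ) : ℂ))).Nonempty := by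
  -- basic arithmetic facts
  obtain ⟨k', rfl⟩ : ∃ k', k = k' + 1 := ⟨k - 1, by omega⟩
  set k := k' + 1 with hkdef
  have hp2 : 2 ≤ p := by
    by_contra hple
    have hp1 : p = 1 := by omega
    subst hp1
    rw [mul_one] at h2
    rw [one_mul] at h1
    omega
  have hkp2 : 2 ≤ k * p := le_trans (by omega) (Nat.mul_le_mul hk hp2)
  set q := k * p - 1 with hqdef
  have hq1 : q + 1 = k * p := by omega
  have hq0 : 0 < q := by omega
  have hqlt : q < k * p := by omega
  -- n ≤ (m+1) * q
  have hE : (m+1)*k*p = (m+1)*q + (m+1) := by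
    have : (m+1)*k*p = (m+1)*(q+1) := by rw [hq1]; ring
    rw [this]; ring
  have hnle : n ≤ (m+1)*q := by omega
  -- q + k ≤ n
  have eA : (m+1)*k - m = m*k' + k := by
    have : (m+1)*k = m*k' + k + m := by rw [hkdef]; ring
    omega
  have hqk : q + k ≤ n := by
    rw [eA] at h1
    have expand : p*(m*k' + k) = p*m*k' + k*p := by ring
    have hpm : 0 < p*m := Nat.mul_pos (by omega) hm
    have hk' : k' ≤ p*m*k' := Nat.le_mul_of_pos_left k' hpm
    omega
  -- the indicator weight functions
  set w : ℕ → Fin n → ℂ := fun v j => if (j:ℕ)/q = v then 1 else 0 with hwdef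
  have hwsupp : ∀ v : ℕ, ∀ j : Fin n, w v j ≠ 0 → (j:ℕ)/q = v := by
    intro v j hj
    by_contra hc
    simp only [hwdef, if_neg hc] at hj
    exact hj rfl
  have hdivle : ∀ j : Fin n, (j:ℕ)/q ≤ m := by
    intro j
    have hjlt : (j:ℕ) < (m+1)*q := lt_of_lt_of_le j.isLt hnle
    have := (Nat.div_lt_iff_lt_mul hq0).mpr hjlt
    omega
  have hcast : ∀ i : Fin m,
      (fun j : Fin n => (((if (j:ℕ)/q = (i:ℕ) then (1:ℝ) else 0) : ℝ) : ℂ)) = w (i:ℕ) := by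
    intro i
    funext j
    simp [hwdef, apply_ite (fun r : ℝ => (r : ℂ))]
  refine ⟨fun i j => if (j:ℕ)/q = (i:ℕ) then 1 else 0, ?_, ?_⟩
  · -- emptiness of jointRankRange (k*p)
    rw [Set.eq_empty_iff_forall_notMem]
    rintro x ⟨V, hV, hA⟩
    have hA' : ∀ i : Fin m, Vᴴ * Matrix.diagonal (w (i:ℕ)) * V = x i • 1 := by
      intro i
      simpa only [hcast] using hA i
    have hx : ∀ i : Fin m, x i = 0 := by
      intro i
      refine auxZero V (w (i:ℕ)) (x i) ?_ (hA' i)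
      exact lt_of_le_of_lt (auxCard hq0 _ (hwsupp (i:ℕ))) hqlt
    -- the leftover block
    have hsum : Matrix.diagonal (w m) = 1 - ∑ i : Fin m, Matrix.diagonal (w (i:ℕ)) := by
      rw [eq_sub_iff_add_eq]
      ext a b
      by_cases hab : a = b
      · subst hab
        simp only [Matrix.add_apply, Matrix.sum_apply, Matrix.diagonal_apply_eq,
          Matrix.one_apply_eq, hwdef]
        rw [sumIndicator]
        rcases lt_or_eq_of_le (hdivle a) with h | h
        · rw [if_pos h, if_neg (Nat.ne_of_lt h)]
          exact zero_add 1
        · rw [if_pos h, if_neg (by omega)]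
          exact add_zero 1
      · simp only [Matrix.add_apply, Matrix.sum_apply, Matrix.diagonal_apply_ne _ hab,
          Matrix.one_apply_ne hab]
        simp
    have hB : Vᴴ * Matrix.diagonal (w m) * V = (1:ℂ) • 1 := by
      rw [hsum, Matrix.mul_sub, Matrix.sub_mul, Matrix.mul_one, hV, Matrix.mul_sum,
        Matrix.sum_mul]
      have hz : ∀ i : Fin m, Vᴴ * Matrix.diagonal (w (i:ℕ)) * V = 0 := by
        intro i
        rw [hA' i, hx i, zero_smul]
      have : ∑ i : Fin m, Vᴴ * Matrix.diagonal (w (i:ℕ)) * V = 0 :=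
        Finset.sum_eq_zero (fun i _ => hz i)
      rw [this, sub_zero, one_smul]
    have hwm : ∀ j : Fin n, w m j ≠ 0 → (j:ℕ)/q = m := hwsupp m
    have h10 : (1:ℂ) = 0 :=
      auxZero V (w m) 1 (lt_of_le_of_lt (auxCard hq0 _ hwm) hqlt) hB
    exact one_ne_zero h10
  · -- nonemptiness of matricialRange
    have hkq : k ≤ q := by
      have := Nat.mul_le_mul (le_refl k) hp2
      omega
    have hbound : ∀ st : Fin p × Fin k,
        (if (st.1:ℕ)+1 < p then (st.1:ℕ)*k + (st.2:ℕ) else q + (st.2:ℕ)) < n := by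
      intro st
      split_ifs with h
      · have := natlt h st.2.isLt
        omega
      · have := st.2.isLt
        omega
    set e : Fin p × Fin k → Fin n :=
      fun st => ⟨if (st.1:ℕ)+1 < p then (st.1:ℕ)*k + (st.2:ℕ) else q + (st.2:ℕ), hbound st⟩
      with hedef
    have hgdiv : ∀ st : Fin p × Fin k,
        ((e st : ℕ))/q = (if (st.1:ℕ)+1 < p then 0 else 1) := by
      intro st
      show (if (st.1:ℕ)+1 < p then (st.1:ℕ)*k + (st.2:ℕ) else q + (st.2:ℕ))/q = _
      split_ifs with h
      · exact Nat.div_eq_of_lt (natlt h st.2.isLt)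
      · refine Nat.div_eq_of_lt_le (by omega) ?_
        have := st.2.isLt
        omega
    have he : Function.Injective e := by
      rintro ⟨s, t⟩ ⟨s', t'⟩ hst
      have hval : (if (s:ℕ)+1 < p then (s:ℕ)*k + (t:ℕ) else q + (t:ℕ))
          = (if (s':ℕ)+1 < p then (s':ℕ)*k + (t':ℕ) else q + (t':ℕ)) := congrArg Fin.val hst
      split_ifs at hval with h h' h'
      · obtain ⟨hs, ht⟩ := natuniq t.isLt t'.isLt hval
        exact Prod.ext (Fin.ext hs) (Fin.ext ht)
      · exfalso
        have := natlt h t.isLt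
        omega
      · exfalso
        have := natlt h' t'.isLt
        omega
      · have ht : (t:ℕ) = (t':ℕ) := by omega
        have hs : (s:ℕ) = (s':ℕ) := by
          have := s.isLt
          have := s'.isLt
          omega
        exact Prod.ext (Fin.ext hs) (Fin.ext ht)
    refine ⟨fun i => Matrix.diagonal (fun s : Fin p =>
        if (if (s:ℕ)+1 < p then 0 else 1) = (i:ℕ) then (1:ℂ) else 0),
      fun i => Matrix.isDiag_diagonal _,
      Matrix.of (fun j st => if j = e st then (1:ℂ) else 0), ?_, ?_⟩
    · have h1' := auxSel e he (fun _ => (1:ℂ))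
      rw [Matrix.diagonal_one, Matrix.mul_one] at h1'
      exact h1'
    · intro i
      simp only [hcast]
      rw [auxSel e he (w (i:ℕ))]
      rw [show (1 : Matrix (Fin k) (Fin k) ℂ) = Matrix.diagonal (fun _ => 1) from
        Matrix.diagonal_one.symm, Matrix.diagonal_kronecker_diagonal]
      apply congrArg Matrix.diagonal
      funext st
      simp only [hwdef, mul_one]
      have hd : (if (st.1:ℕ)+1 < p then (st.1:ℕ)*k + (st.2:ℕ) else q + (st.2:ℕ))/q
          = (if (st.1:ℕ)+1 < p then 0 else 1) := hgdiv st
      rw [hd]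
end

section
/- Let X = [[0,1],[1,0]], Y = [[0,−i],[i,0]], Z = [[1,0],[0,−1]] be the Pauli matrices and let X^{⊗4}, Y^{⊗4}, Z^{⊗4} denote their fourfold Kronecker powers, which are 16×16 matrices. Then there exists a 16×16 unitary matrix U such that U*X^{⊗4}U = D_X ⊗ I_4, U*Y^{⊗4}U = D_Y ⊗ I_4, and U*Z^{⊗4}U = D_Z ⊗ I_4, where D_X = diag(1,1,−1,−1), D_Y = diag(1,−1,−1,1), D_Z = diag(1,−1,1,−1). In particular, Λ_{(4:4)}(X^{⊗4}, Y^{⊗4}, Z^{⊗4}) is non-empty. -/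
open Matrix Kronecker

/-- The Pauli matrix `X`. -/
def pauliX : Matrix (Fin 2) (Fin 2) ℂ := !![0, 1; 1, 0]

/-- The Pauli matrix `Y`. -/
def pauliY : Matrix (Fin 2) (Fin 2) ℂ := !![0, -Complex.I; Complex.I, 0]

/-- The Pauli matrix `Z`. -/
def pauliZ : Matrix (Fin 2) (Fin 2) ℂ := !![1, 0; 0, -1]

namespace Stmt18Aux

abbrev I16 : Type := ((Fin 2 × Fin 2) × Fin 2) × Fin 2
abbrev J16 : Type := Fin 4 × Fin 4

def enc (i : I16) : Fin 16 :=
  ⟨8 * i.1.1.1.val + 4 * i.1.1.2.val + 2 * i.1.2.val + i.2.val, by omega⟩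
def encJ (j : J16) : Fin 16 := ⟨4 * j.1.val + j.2.val, by omega⟩

def Wtab : Matrix (Fin 16) (Fin 16) ℤ :=
  !![1, 1, 0, 0, 0, 0, 0, 0, 1, 1, 0, 0, 0, 0, 0, 0;
     0, 0, 0, 0, 1, 1, 0, 0, 0, 0, 0, 0, 1, 1, 0, 0;
     0, 0, 0, 0, 1, -1, 0, 0, 0, 0, 0, 0, -1, 1, 0, 0;
     1, -1, 0, 0, 0, 0, 0, 0, -1, 1, 0, 0, 0, 0, 0, 0;
     0, 0, 0, 0, 0, 0, 1, 1, 0, 0, 0, 0, 0, 0, 1, 1;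
     0, 0, 1, 1, 0, 0, 0, 0, 0, 0, 1, 1, 0, 0, 0, 0;
     0, 0, 1, -1, 0, 0, 0, 0, 0, 0, -1, 1, 0, 0, 0, 0;
     0, 0, 0, 0, 0, 0, 1, -1, 0, 0, 0, 0, 0, 0, -1, 1;
     0, 0, 0, 0, 0, 0, 1, -1, 0, 0, 0, 0, 0, 0, 1, -1;
     0, 0, 1, -1, 0, 0, 0, 0, 0, 0, 1, -1, 0, 0, 0, 0;
     0, 0, 1, 1, 0, 0, 0, 0, 0, 0, -1, -1, 0, 0, 0, 0;
     0, 0, 0, 0, 0, 0, 1, 1, 0, 0, 0, 0, 0, 0, -1, -1;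
     1, -1, 0, 0, 0, 0, 0, 0, 1, -1, 0, 0, 0, 0, 0, 0;
     0, 0, 0, 0, 1, -1, 0, 0, 0, 0, 0, 0, 1, -1, 0, 0;
     0, 0, 0, 0, 1, 1, 0, 0, 0, 0, 0, 0, -1, -1, 0, 0;
     1, 1, 0, 0, 0, 0, 0, 0, -1, -1, 0, 0, 0, 0, 0, 0]


def W : Matrix I16 J16 ℤ := Matrix.of fun i j => Wtab (enc i) (encJ j)

def pX : Matrix (Fin 2) (Fin 2) ℤ := !![0, 1; 1, 0]
def pS : Matrix (Fin 2) (Fin 2) ℤ := !![0, -1; 1, 0]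
def pZ : Matrix (Fin 2) (Fin 2) ℤ := !![1, 0; 0, -1]

def AX : Matrix I16 I16 ℤ := pX ⊗ₖ pX ⊗ₖ pX ⊗ₖ pX
def AY : Matrix I16 I16 ℤ := pS ⊗ₖ pS ⊗ₖ pS ⊗ₖ pS
def AZ : Matrix I16 I16 ℤ := pZ ⊗ₖ pZ ⊗ₖ pZ ⊗ₖ pZ

def KX : Matrix J16 J16 ℤ := (Matrix.diagonal ![1, 1, -1, -1]) ⊗ₖ 1
def KY : Matrix J16 J16 ℤ := (Matrix.diagonal ![1, -1, -1, 1]) ⊗ₖ 1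
def KZ : Matrix J16 J16 ℤ := (Matrix.diagonal ![1, -1, 1, -1]) ⊗ₖ 1

lemma hWW : Wᵀ * W = (4 : ℤ) • 1 := by decide
lemma hWWt : W * Wᵀ = (4 : ℤ) • 1 := by decide
lemma hAXW : AX * W = W * KX := by decide
lemma hAYW : AY * W = W * KY := by decide
lemma hAZW : AZ * W = W * KZ := by decide

noncomputable abbrev c : ℤ →+* ℂ := Int.castRingHom ℂ

lemma kmap {l m n p : Type*} (A : Matrix l m ℤ) (B : Matrix n p ℤ) :
    (A.map c) ⊗ₖ (B.map c) = (A ⊗ₖ B).map c := by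
  ext ⟨i, i'⟩ ⟨j, j'⟩
  simp [Matrix.kroneckerMap_apply, Matrix.map_apply]

lemma hpX : pauliX = pX.map c := by
  ext i j; fin_cases i <;> fin_cases j <;> simp [pauliX, pX]

lemma hpZ : pauliZ = pZ.map c := by
  ext i j; fin_cases i <;> fin_cases j <;> simp [pauliZ, pZ]

lemma hpY : pauliY = Complex.I • pS.map c := by
  ext i j; fin_cases i <;> fin_cases j <;> simp [pauliY, pS]

lemma hX4 : pauliX ⊗ₖ pauliX ⊗ₖ pauliX ⊗ₖ pauliX = AX.map c := by
  rw [hpX, kmap, kmap, kmap, AX]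

lemma hZ4 : pauliZ ⊗ₖ pauliZ ⊗ₖ pauliZ ⊗ₖ pauliZ = AZ.map c := by
  rw [hpZ, kmap, kmap, kmap, AZ]

lemma hY4 : pauliY ⊗ₖ pauliY ⊗ₖ pauliY ⊗ₖ pauliY = AY.map c := by
  rw [hpY]
  simp only [Matrix.smul_kronecker, Matrix.kronecker_smul, kmap, smul_smul]
  rw [show Complex.I * (Complex.I * (Complex.I * Complex.I)) = 1 by
    simp [Complex.I_mul_I], one_smul]
  rfl

lemma map_one' {n : Type*} [Fintype n] [DecidableEq n] :
    ((1 : Matrix n n ℤ).map c) = 1 :=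
  Matrix.map_one _ (map_zero c) (map_one c)

lemma map4 {n m : Type*} (M : Matrix n m ℤ) :
    (((4:ℤ) • M).map c) = (4:ℂ) • (M.map c) := by
  ext i j
  simp only [Matrix.map_apply, Matrix.smul_apply, smul_eq_mul]
  rw [_root_.map_mul]
  norm_num

lemma hdiag (d : Fin 4 → ℤ) :
    (Matrix.diagonal (fun i => (d i : ℂ))) ⊗ₖ (1 : Matrix (Fin 4) (Fin 4) ℂ)
      = ((Matrix.diagonal d) ⊗ₖ (1 : Matrix (Fin 4) (Fin 4) ℤ)).map c := by
  rw [← kmap, map_one']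
  ext i j
  by_cases h : i = j <;> simp [Matrix.map_apply, Matrix.diagonal, h]

lemma hdiag' (d : Fin 4 → ℤ) (dc : Fin 4 → ℂ) (h : ∀ i, dc i = (d i : ℂ)) :
    (Matrix.diagonal dc) ⊗ₖ (1 : Matrix (Fin 4) (Fin 4) ℂ)
      = ((Matrix.diagonal d) ⊗ₖ (1 : Matrix (Fin 4) (Fin 4) ℤ)).map c := by
  rw [show dc = fun i => (d i : ℂ) from funext h]
  exact hdiag d

noncomputable def U : Matrix I16 J16 ℂ := (2⁻¹ : ℂ) • (W.map c)

lemma hUH : Uᴴ = (2⁻¹ : ℂ) • (Wᵀ.map c) := by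
  ext i j
  simp [U, Matrix.conjTranspose_apply, Matrix.map_apply]

lemma hUU : Uᴴ * U = 1 := by
  rw [hUH, U, Matrix.smul_mul, Matrix.mul_smul, smul_smul,
    ← Matrix.map_mul, hWW, map4, map_one', smul_smul]
  norm_num

lemma hUUt : U * Uᴴ = 1 := by
  rw [hUH, U, Matrix.smul_mul, Matrix.mul_smul, smul_smul,
    ← Matrix.map_mul, hWWt, map4, map_one', smul_smul]
  norm_num

lemma key (Aint : Matrix I16 I16 ℤ) (K : Matrix J16 J16 ℤ) (h : Aint * W = W * K) :
    Uᴴ * (Aint.map c) * U = K.map c := by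
  rw [hUH, U, Matrix.smul_mul, Matrix.mul_smul, Matrix.smul_mul, smul_smul,
    ← Matrix.map_mul, ← Matrix.map_mul, Matrix.mul_assoc, h,
    ← Matrix.mul_assoc, hWW, Matrix.smul_mul, Matrix.one_mul, map4, smul_smul]
  norm_num

end Stmt18Aux

/-- Example 3.6: there is a `16 × 16` unitary `U` with
`U* X^{⊗4} U = D_X ⊗ I_4`, `U* Y^{⊗4} U = D_Y ⊗ I_4`, `U* Z^{⊗4} U = D_Z ⊗ I_4`,
where `D_X = diag(1,1,-1,-1)`, `D_Y = diag(1,-1,-1,1)`, `D_Z = diag(1,-1,1,-1)`;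
in particular `Λ_{(4:4)}(X^{⊗4}, Y^{⊗4}, Z^{⊗4})` is nonempty. -/
theorem stmt18 :
    (∃ U : Matrix (((Fin 2 × Fin 2) × Fin 2) × Fin 2) (Fin 4 × Fin 4) ℂ,
      Uᴴ * U = 1 ∧ U * Uᴴ = 1 ∧
      Uᴴ * (pauliX ⊗ₖ pauliX ⊗ₖ pauliX ⊗ₖ pauliX) * U
        = (Matrix.diagonal ![1, 1, -1, -1]) ⊗ₖ (1 : Matrix (Fin 4) (Fin 4) ℂ) ∧
      Uᴴ * (pauliY ⊗ₖ pauliY ⊗ₖ pauliY ⊗ₖ pauliY) * U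
        = (Matrix.diagonal ![1, -1, -1, 1]) ⊗ₖ (1 : Matrix (Fin 4) (Fin 4) ℂ) ∧
      Uᴴ * (pauliZ ⊗ₖ pauliZ ⊗ₖ pauliZ ⊗ₖ pauliZ) * U
        = (Matrix.diagonal ![1, -1, 1, -1]) ⊗ₖ (1 : Matrix (Fin 4) (Fin 4) ℂ)) ∧
    (matricialRange 4 4
      ![pauliX ⊗ₖ pauliX ⊗ₖ pauliX ⊗ₖ pauliX,
        pauliY ⊗ₖ pauliY ⊗ₖ pauliY ⊗ₖ pauliY,
        pauliZ ⊗ₖ pauliZ ⊗ₖ pauliZ ⊗ₖ pauliZ]).Nonempty := by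
  have hmX : Stmt18Aux.Uᴴ * (pauliX ⊗ₖ pauliX ⊗ₖ pauliX ⊗ₖ pauliX) * Stmt18Aux.U
      = (Matrix.diagonal ![1, 1, -1, -1]) ⊗ₖ (1 : Matrix (Fin 4) (Fin 4) ℂ) := by
    rw [Stmt18Aux.hX4, Stmt18Aux.key _ _ Stmt18Aux.hAXW, Stmt18Aux.KX]
    exact (Stmt18Aux.hdiag' ![1, 1, -1, -1] ![1, 1, -1, -1]
      (by intro i; fin_cases i <;> simp)).symm
  have hmY : Stmt18Aux.Uᴴ * (pauliY ⊗ₖ pauliY ⊗ₖ pauliY ⊗ₖ pauliY) * Stmt18Aux.U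
      = (Matrix.diagonal ![1, -1, -1, 1]) ⊗ₖ (1 : Matrix (Fin 4) (Fin 4) ℂ) := by
    rw [Stmt18Aux.hY4, Stmt18Aux.key _ _ Stmt18Aux.hAYW, Stmt18Aux.KY]
    exact (Stmt18Aux.hdiag' ![1, -1, -1, 1] ![1, -1, -1, 1]
      (by intro i; fin_cases i <;> simp)).symm
  have hmZ : Stmt18Aux.Uᴴ * (pauliZ ⊗ₖ pauliZ ⊗ₖ pauliZ ⊗ₖ pauliZ) * Stmt18Aux.U
      = (Matrix.diagonal ![1, -1, 1, -1]) ⊗ₖ (1 : Matrix (Fin 4) (Fin 4) ℂ) := by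
    rw [Stmt18Aux.hZ4, Stmt18Aux.key _ _ Stmt18Aux.hAZW, Stmt18Aux.KZ]
    exact (Stmt18Aux.hdiag' ![1, -1, 1, -1] ![1, -1, 1, -1]
      (by intro i; fin_cases i <;> simp)).symm
  refine ⟨⟨Stmt18Aux.U, Stmt18Aux.hUU, Stmt18Aux.hUUt, hmX, hmY, hmZ⟩, ?_⟩
  refine ⟨![Matrix.diagonal ![1, 1, -1, -1], Matrix.diagonal ![1, -1, -1, 1],
    Matrix.diagonal ![1, -1, 1, -1]], ?_, Stmt18Aux.U, Stmt18Aux.hUU, ?_⟩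
  · intro j
    fin_cases j <;> exact Matrix.isDiag_diagonal _
  · intro j
    fin_cases j
    · simpa using hmX
    · simpa using hmY
    · simpa using hmZ
end

section
/- Let X = [[0,1],[1,0]], Y = [[0,−i],[i,0]], Z = [[1,0],[0,−1]] be the Pauli matrices and let X^{⊗3}, Y^{⊗3}, Z^{⊗3} denote their threefold Kronecker powers, which are 8×8 matrices. Then the joint rank-4 numerical range Λ_4(X^{⊗3}, Y^{⊗3}, Z^{⊗3}) is non-empty (it contains (0,0,1)), while the joint rank (4:2)-matricial range Λ_{(4:2)}(X^{⊗3}, Y^{⊗3}, Z^{⊗3}) is empty. -/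
/-!
For `Λ_4`, take the span of the four even-weight basis vectors of `(ℂ²)^{⊗3}`: `X^{⊗3}` and
`Y^{⊗3}` flip all three bits, so their compressions to it vanish, while `Z^{⊗3}` acts on the
basis vector of weight `w` as `(-1)^w`, i.e. as the identity there.

For `Λ_{(4:2)}` we have `kp = 8 = n`, so `V` is unitary and compression by `V` is multiplicative.
It would turn the anticommuting involutions `X^{⊗3}, Y^{⊗3}` into the commuting matrices
`D_1 ⊗ I_4, D_2 ⊗ I_4`; but two involutions that both commute and anticommute have product `0`.
-/

open Matrix Kronecker

theorem not_commute_of_mul_self_eq_one_of_anticommute {R : Type*} [Ring R] [Nontrivial R]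
    [IsAddTorsionFree R] {a b : R} (ha : a * a = 1) (hb : b * b = 1)
    (hab : a * b = -(b * a)) : ¬Commute a b := by
  intro hcomm
  have hzero : a * b = 0 := by
    have h2 : 2 • (a * b) = 2 • 0 := by
      rw [two_nsmul, smul_zero]
      nth_rewrite 1 [hab]
      rw [← hcomm.eq, neg_add_cancel]
    exact IsAddTorsionFree.nsmul_right_injective two_ne_zero h2
  apply one_ne_zero (α := R)
  calc (1 : R) = a * a * (b * b) := by rw [ha, hb, one_mul]
    _ = a * (a * b) * b := by simp only [mul_assoc]
    _ = 0 := by rw [hzero, mul_zero, zero_mul]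

namespace Matrix

variable {I κ α : Type*} [Fintype I]

theorem IsDiag.commute [DecidableEq I] [CommSemiring α] {A B : Matrix I I α}
    (hA : A.IsDiag) (hB : B.IsDiag) : Commute A B := by
  rw [← hA.diagonal_diag, ← hB.diagonal_diag]
  exact commute_diagonal _ _

theorem neg_kronecker [Ring α] {l m n o : Type*} (A : Matrix l m α) (B : Matrix n o α) :
    (-A) ⊗ₖ B = -(A ⊗ₖ B) := by
  ext
  simp [kroneckerMap_apply]

theorem kronecker_neg [Ring α] {l m n o : Type*} (A : Matrix l m α) (B : Matrix n o α) :
    A ⊗ₖ (-B) = -(A ⊗ₖ B) := by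
  ext
  simp [kroneckerMap_apply]

theorem conjTranspose_mul_mul_of_mul_conjTranspose_eq_one [DecidableEq I] [Fintype κ]
    [Semiring α] [StarRing α] {V : Matrix I κ α} (hV : V * Vᴴ = 1) (M N : Matrix I I α) :
    (Vᴴ * M * V) * (Vᴴ * N * V) = Vᴴ * (M * N) * V := by
  simp only [Matrix.mul_assoc]
  rw [← Matrix.mul_assoc V Vᴴ, hV, Matrix.one_mul]

theorem conjTranspose_one_submatrix_mul_mul [DecidableEq I] [Semiring α] [StarRing α]
    (f : κ → I) (M : Matrix I I α) :
    ((1 : Matrix I I α).submatrix id f)ᴴ * M * (1 : Matrix I I α).submatrix id f =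
      M.submatrix f f := by
  ext i j
  simp [mul_apply, one_apply]

end Matrix

theorem mem_jointRankRange_of_submatrix {I J : Type*} [Fintype I] [DecidableEq I] {k : ℕ}
    (f : Fin k ↪ I) (A : J → Matrix I I ℂ) (x : J → ℂ)
    (hA : ∀ j, (A j).submatrix f f = x j • 1) : x ∈ jointRankRange k A :=
  ⟨(1 : Matrix I I ℂ).submatrix id f,
    by rw [← Matrix.mul_one (_ᴴ), conjTranspose_one_submatrix_mul_mul, submatrix_one_embedding],
    fun j => by rw [conjTranspose_one_submatrix_mul_mul, hA]⟩

theorem matricialRange_eq_empty_of_anticommute {I J : Type*} [Fintype I] [DecidableEq I]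
    [Nonempty I] {k p : ℕ} (hcard : Fintype.card I = p * k) (A : J → Matrix I I ℂ) {i j : J}
    (hi : A i * A i = 1) (hj : A j * A j = 1) (hij : A i * A j = -(A j * A i)) :
    matricialRange k p A = ∅ := by
  rw [Set.eq_empty_iff_forall_notMem]
  rintro D ⟨hdiag, V, hV, hA⟩
  have e : I ≃ Fin p × Fin k := Fintype.equivOfCardEq (by simpa using hcard)
  have : Nonempty (Fin p × Fin k) := e.symm.nonempty
  have : IsAddTorsionFree (Matrix (Fin p × Fin k) (Fin p × Fin k) ℂ) :=
    IsAddTorsionFree.of_module_rat _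
  have hcomp := conjTranspose_mul_mul_of_mul_conjTranspose_eq_one
    ((mul_eq_one_comm_of_equiv e).mpr hV)
  refine not_commute_of_mul_self_eq_one_of_anticommute (a := Vᴴ * A i * V)
    (b := Vᴴ * A j * V) ?_ ?_ ?_ ?_
  · rw [hcomp, hi, Matrix.mul_one, hV]
  · rw [hcomp, hj, Matrix.mul_one, hV]
  · rw [hcomp, hcomp, hij, Matrix.mul_neg, Matrix.neg_mul]
  · rw [hA i, hA j]
    exact ((hdiag i).kronecker isDiag_one).commute ((hdiag j).kronecker isDiag_one)

theorem kronecker_kronecker_self_mul_self {α ι : Type*} [CommRing α] [Fintype ι] [DecidableEq ι]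
    {A : Matrix ι ι α} (hA : A * A = 1) : (A ⊗ₖ A ⊗ₖ A) * (A ⊗ₖ A ⊗ₖ A) = 1 := by
  rw [← mul_kronecker_mul, ← mul_kronecker_mul, hA, one_kronecker_one, one_kronecker_one]

theorem kronecker_kronecker_self_anticommute {α ι : Type*} [CommRing α] [Fintype ι]
    {A B : Matrix ι ι α} (hAB : A * B = -(B * A)) :
    (A ⊗ₖ A ⊗ₖ A) * (B ⊗ₖ B ⊗ₖ B) = -((B ⊗ₖ B ⊗ₖ B) * (A ⊗ₖ A ⊗ₖ A)) := by
  simp only [← mul_kronecker_mul, hAB, neg_kronecker, kronecker_neg, neg_neg]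

theorem pauliX_mul_self : pauliX * pauliX = 1 := by
  ext i j
  fin_cases i <;> fin_cases j <;> simp [pauliX, one_apply]

theorem pauliY_mul_self : pauliY * pauliY = 1 := by
  ext i j
  fin_cases i <;> fin_cases j <;> simp [pauliY, one_apply]

theorem pauliX_mul_pauliY : pauliX * pauliY = -(pauliY * pauliX) := by
  ext i j
  fin_cases i <;> fin_cases j <;> simp [pauliX, pauliY]

def evenWeightIndex : Fin 4 ↪ (Fin 2 × Fin 2) × Fin 2 :=
  ⟨![((0, 0), 0), ((0, 1), 1), ((1, 0), 1), ((1, 1), 0)], by decide⟩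

/-- Example 3.5: for the threefold Kronecker powers of the Pauli
matrices, the joint rank-4 numerical range `Λ_4(X^{⊗3}, Y^{⊗3}, Z^{⊗3})` is nonempty
(it contains `(0, 0, 1)`), while `Λ_{(4:2)}(X^{⊗3}, Y^{⊗3}, Z^{⊗3})` is empty. -/
theorem stmt19 :
    (![0, 0, 1] : Fin 3 → ℂ) ∈
      jointRankRange 4
        ![pauliX ⊗ₖ pauliX ⊗ₖ pauliX,
          pauliY ⊗ₖ pauliY ⊗ₖ pauliY,
          pauliZ ⊗ₖ pauliZ ⊗ₖ pauliZ] ∧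
    matricialRange 4 2
        ![pauliX ⊗ₖ pauliX ⊗ₖ pauliX,
          pauliY ⊗ₖ pauliY ⊗ₖ pauliY,
          pauliZ ⊗ₖ pauliZ ⊗ₖ pauliZ] = ∅ := by
  constructor
  · refine mem_jointRankRange_of_submatrix evenWeightIndex _ _ fun j => ?_
    ext a b
    fin_cases j <;> fin_cases a <;> fin_cases b <;>
      simp [evenWeightIndex, pauliX, pauliY, pauliZ, kroneckerMap_apply, one_apply]
  · exact matricialRange_eq_empty_of_anticommute (i := 0) (j := 1) (by simp) _
      (kronecker_kronecker_self_mul_self pauliX_mul_self)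
      (kronecker_kronecker_self_mul_self pauliY_mul_self)
      (kronecker_kronecker_self_anticommute pauliX_mul_pauliY)
end
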